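/- arXiv:2010.03810 — 9 statements merged into one kernel-verified Lean document; each statement's English description precedes it below -/
import Mathlib

section
/- For all positive integers n and r, the number of r-tuples (a_1, …, a_r) of nonnegative integers with a_1 + ⋯ + a_r = n such that the multinomial coefficient n!/(a_1!⋯a_r!) is odd equals r^{b(n)}, where b(n) is the number of ones in the binary expansion of n. -/
open Finset

private lemma aux_multinomial_univ_cons {r : ℕ} (a0 : ℕ) (g : Fin r → ℕ) :
    Nat.multinomial Finset.univ (Fin.cons a0 g) =
      (a0 + ∑ i, g i).choose a0 * Nat.multinomial Finset.univ g := by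
  have hpos : 0 < Nat.factorial a0 * ∏ i, Nat.factorial (g i) := by positivity
  refine Nat.eq_of_mul_eq_mul_left hpos ?_
  have h1 := Nat.multinomial_spec (Finset.univ : Finset (Fin (r+1))) (Fin.cons a0 g)
  have h2 := Nat.multinomial_spec (Finset.univ : Finset (Fin r)) g
  rw [Fin.prod_univ_succ, Fin.sum_univ_succ] at h1
  simp only [Fin.cons_zero, Fin.cons_succ] at h1
  have hc := Nat.choose_mul_factorial_mul_factorial (Nat.le_add_right a0 (∑ i, g i))
  rw [Nat.add_sub_cancel_left] at hc
  calc Nat.factorial a0 * (∏ i, Nat.factorial (g i)) * Nat.multinomial Finset.univ (Fin.cons a0 g)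
      = Nat.factorial (a0 + ∑ i, g i) := by rw [mul_assoc] at h1 ⊢; exact h1
    _ = (a0 + ∑ i, g i).choose a0 * Nat.factorial a0 * Nat.factorial (∑ i, g i) := hc.symm
    _ = (a0 + ∑ i, g i).choose a0 * Nat.factorial a0 *
        ((∏ i, Nat.factorial (g i)) * Nat.multinomial Finset.univ g) := by
        rw [h2]
    _ = Nat.factorial a0 * (∏ i, Nat.factorial (g i)) *
        ((a0 + ∑ i, g i).choose a0 * Nat.multinomial Finset.univ g) := by
        ring

private lemma aux_odd_choose_step (n k : ℕ) :
    Odd (n.choose k) ↔ Odd ((n % 2).choose (k % 2)) ∧ Odd ((n / 2).choose (k / 2)) := by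
  have : Fact (Nat.Prime 2) := ⟨Nat.prime_two⟩
  have h := Choose.choose_modEq_choose_mod_mul_choose_div_nat (p := 2) (n := n) (k := k)
  rw [Nat.ModEq] at h
  rw [Nat.odd_iff, h, ← Nat.odd_iff, Nat.odd_mul]

private lemma aux_sum_decomp {r : ℕ} (g : Fin r → ℕ) :
    ∑ i, g i = 2 * (∑ i, g i / 2) + ∑ i, g i % 2 := by
  rw [Finset.mul_sum, ← Finset.sum_add_distrib]
  exact Finset.sum_congr rfl fun i _ => by omega

private lemma aux_odd_multinomial_iff : ∀ (r : ℕ) (a : Fin r → ℕ),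
    Odd (Nat.multinomial Finset.univ a) ↔
      (∑ i, a i % 2) = (∑ i, a i) % 2 ∧
        Odd (Nat.multinomial Finset.univ (fun i => a i / 2)) := by
  intro r
  induction r with
  | zero => intro a; simp
  | succ r ih =>
    intro a
    rw [← Fin.cons_self_tail a]
    set a0 := a 0 with ha0
    set g := Fin.tail a with hg
    have hdiv : (fun i => Fin.cons a0 g i / 2) = Fin.cons (a0 / 2) (fun i => g i / 2) := by
      funext i
      refine Fin.cases ?_ ?_ i <;> simp
    rw [aux_multinomial_univ_cons, hdiv, aux_multinomial_univ_cons, Fin.sum_univ_succ,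
      Fin.sum_univ_succ]
    simp only [Fin.cons_zero, Fin.cons_succ]
    rw [Nat.odd_mul, Nat.odd_mul, ih g, aux_odd_choose_step]
    have hm := aux_sum_decomp g
    set m := ∑ i, g i with hmdef
    set m' := ∑ i, g i / 2 with hm'def
    set S := ∑ i, g i % 2 with hSdef
    have h0 : a0 % 2 < 2 := Nat.mod_lt _ (by norm_num)
    have h1 : (a0 + m) % 2 < 2 := Nat.mod_lt _ (by norm_num)
    have h2 : a0 = 2 * (a0 / 2) + a0 % 2 := (Nat.div_add_mod a0 2).symm.trans (by ring)
    have h3 : a0 + m = 2 * ((a0 + m) / 2) + (a0 + m) % 2 :=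
      (Nat.div_add_mod (a0 + m) 2).symm.trans (by ring)
    constructor
    · rintro ⟨⟨hc1, hc2⟩, hS, hg2⟩
      have hle : a0 % 2 ≤ (a0 + m) % 2 := by
        by_contra hcon
        have : a0 % 2 = 1 ∧ (a0 + m) % 2 = 0 := by omega
        rw [this.1, this.2] at hc1
        simp at hc1
      have hkey : a0 % 2 + m % 2 = (a0 + m) % 2 := by omega
      have heq : a0 / 2 + m' = (a0 + m) / 2 := by omega
      refine ⟨by omega, ?_, hg2⟩
      rwa [heq]
    · rintro ⟨hA, hB, hg2⟩
      have hS : S = m % 2 := by omega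
      have heq : a0 / 2 + m' = (a0 + m) / 2 := by omega
      refine ⟨⟨?_, by rwa [heq] at hB⟩, hS, hg2⟩
      have : (a0 % 2 = 0 ∧ ((a0 + m) % 2 = 0 ∨ (a0 + m) % 2 = 1)) ∨
          (a0 % 2 = 1 ∧ (a0 + m) % 2 = 1) := by omega
      rcases this with ⟨h, h' | h'⟩ | ⟨h, h'⟩ <;> rw [h, h'] <;> decide

private lemma aux_card_even (r m : ℕ) :
    ((Finset.Nat.antidiagonalTuple r (2 * m)).filter
        (fun a => Odd (Nat.multinomial Finset.univ a))).card
      = ((Finset.Nat.antidiagonalTuple r m).filter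
        (fun a => Odd (Nat.multinomial Finset.univ a))).card := by
  refine Finset.card_nbij' (fun a j => a j / 2) (fun b j => 2 * b j) ?_ ?_ ?_ ?_
  · intro a ha
    rw [Finset.mem_coe, Finset.mem_filter, Finset.Nat.mem_antidiagonalTuple] at ha ⊢
    beta_reduce
    obtain ⟨hsum, hodd⟩ := ha
    rw [aux_odd_multinomial_iff] at hodd
    obtain ⟨hS, hodd2⟩ := hodd
    rw [hsum] at hS
    have hd := aux_sum_decomp a
    rw [hsum] at hd
    exact ⟨by omega, hodd2⟩
  · intro b hb
    rw [Finset.mem_coe, Finset.mem_filter, Finset.Nat.mem_antidiagonalTuple] at hb ⊢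
    beta_reduce
    obtain ⟨hsum, hodd⟩ := hb
    constructor
    · rw [← Finset.mul_sum, hsum]
    · rw [aux_odd_multinomial_iff]
      refine ⟨?_, ?_⟩
      · simp [Nat.mul_mod_right, ← Finset.mul_sum, hsum]
      · have : (fun j => 2 * b j / 2) = b := by funext j; omega
        rwa [this]
  · intro a ha
    rw [Finset.mem_coe, Finset.mem_filter, Finset.Nat.mem_antidiagonalTuple] at ha
    obtain ⟨hsum, hodd⟩ := ha
    rw [aux_odd_multinomial_iff] at hodd
    have hS : ∑ i, a i % 2 = 0 := by rw [hodd.1, hsum]; omega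
    have hz : ∀ j, a j % 2 = 0 := fun j =>
      (Finset.sum_eq_zero_iff.mp hS) j (Finset.mem_univ j)
    funext j
    beta_reduce
    have := hz j
    omega
  · intro b hb
    funext j
    beta_reduce
    omega

private lemma aux_card_odd (r m : ℕ) :
    ((Finset.Nat.antidiagonalTuple r (2 * m + 1)).filter
        (fun a => Odd (Nat.multinomial Finset.univ a))).card
      = r * ((Finset.Nat.antidiagonalTuple r m).filter
        (fun a => Odd (Nat.multinomial Finset.univ a))).card := by
  have hcard : ((Finset.univ : Finset (Fin r)) ×ˢ
      ((Finset.Nat.antidiagonalTuple r m).filter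
        (fun a => Odd (Nat.multinomial Finset.univ a)))).card
      = r * ((Finset.Nat.antidiagonalTuple r m).filter
        (fun a => Odd (Nat.multinomial Finset.univ a))).card := by
    rw [Finset.card_product, Finset.card_univ, Fintype.card_fin]
  rw [← hcard]
  refine (Finset.card_nbij
    (fun p => fun j => 2 * p.2 j + if j = p.1 then 1 else 0) ?_ ?_ ?_).symm
  · rintro ⟨i, b⟩ hp
    rw [Finset.mem_coe, Finset.mem_product, Finset.mem_filter, Finset.Nat.mem_antidiagonalTuple] at hp
    obtain ⟨-, hsum, hodd⟩ := hp
    rw [Finset.mem_coe, Finset.mem_filter, Finset.Nat.mem_antidiagonalTuple]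
    beta_reduce
    simp only at hsum hodd
    have hsum2 : ∑ j, (2 * b j + if j = i then 1 else 0) = 2 * m + 1 := by
      rw [Finset.sum_add_distrib, ← Finset.mul_sum, hsum]
      simp
    refine ⟨hsum2, ?_⟩
    rw [aux_odd_multinomial_iff]
    constructor
    · rw [hsum2]
      have : ∀ j : Fin r, (2 * b j + if j = i then 1 else 0) % 2
          = if j = i then 1 else 0 := by intro j; split <;> omega
      simp only [this]
      simp only [Finset.sum_ite_eq', Finset.mem_univ, if_pos]
      omega
    · have : (fun j => (2 * b j + if j = i then 1 else 0) / 2) = b := by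
        funext j; split <;> omega
      rwa [this]
  · rintro ⟨i, b⟩ hp ⟨i', b'⟩ hp' heq
    have hii : i = i' := by
      by_contra hne
      have h1 : 2 * b i + 1 = 2 * b' i + if i = i' then 1 else 0 := by
        simpa using congrFun heq i
      rw [if_neg hne] at h1
      omega
    subst hii
    have hb : b = b' := by
      funext j
      have h2 : 2 * b j + (if j = i then 1 else 0)
          = 2 * b' j + (if j = i then 1 else 0) := by
        simpa using congrFun heq j
      omega
    rw [hb]
  · intro a ha
    rw [Finset.mem_coe, Finset.mem_filter, Finset.Nat.mem_antidiagonalTuple] at ha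
    obtain ⟨hsum, hodd⟩ := ha
    rw [aux_odd_multinomial_iff] at hodd
    obtain ⟨hS, hodd2⟩ := hodd
    rw [hsum] at hS
    have hS1 : ∑ j, a j % 2 = 1 := by omega
    have hex : ∃ i : Fin r, a i % 2 ≠ 0 := by
      by_contra hc
      push_neg at hc
      rw [Finset.sum_eq_zero (fun j _ => hc j)] at hS1
      omega
    obtain ⟨i, hi⟩ := hex
    have hi1 : a i % 2 = 1 := by omega
    have hrest : ∑ j ∈ Finset.univ.erase i, a j % 2 = 0 := by
      have h := Finset.add_sum_erase Finset.univ (fun j => a j % 2) (Finset.mem_univ i)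
      beta_reduce at h
      omega
    have hz : ∀ j, j ≠ i → a j % 2 = 0 := fun j hj =>
      Finset.sum_eq_zero_iff.mp hrest j (Finset.mem_erase.mpr ⟨hj, Finset.mem_univ j⟩)
    refine ⟨(i, fun j => a j / 2), Finset.mem_coe.mpr ?_, ?_⟩
    · rw [Finset.mem_product, Finset.mem_filter, Finset.Nat.mem_antidiagonalTuple]
      have hd := aux_sum_decomp a
      rw [hsum] at hd
      refine ⟨Finset.mem_univ i, ?_, hodd2⟩
      show ∑ x : Fin r, a x / 2 = m
      omega
    · funext j
      show 2 * (a j / 2) + (if j = i then 1 else 0) = a j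
      by_cases hj : j = i
      · subst hj
        rw [if_pos rfl]
        omega
      · rw [if_neg hj]
        have := hz j hj
        omega

private lemma aux_count_step (n : ℕ) (hn : 0 < n) :
    (Nat.digits 2 n).count 1
      = (if n % 2 = 1 then 1 else 0) + (Nat.digits 2 (n / 2)).count 1 := by
  rw [Nat.digits_def' (by norm_num : 1 < 2) hn, List.count_cons]
  have : n % 2 < 2 := Nat.mod_lt _ (by norm_num)
  rcases (by omega : n % 2 = 0 ∨ n % 2 = 1) with h | h <;> rw [h] <;> simp [add_comm]

private lemma aux_main (r : ℕ) : ∀ n : ℕ,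
    ((Finset.Nat.antidiagonalTuple r n).filter
        (fun a => Odd (Nat.multinomial Finset.univ a))).card
      = r ^ ((Nat.digits 2 n).count 1) := by
  intro n
  induction n using Nat.strong_induction_on with
  | _ n ih =>
    rcases Nat.eq_zero_or_pos n with rfl | hn
    · rw [Finset.Nat.antidiagonalTuple_zero_right]
      have h1 : Nat.multinomial (Finset.univ : Finset (Fin r)) 0 = 1 := by
        simp [Nat.multinomial]
      simp [Finset.filter_singleton, h1]
    · have hlt : n / 2 < n := Nat.div_lt_self hn (by norm_num)
      rw [aux_count_step n hn]
      rcases Nat.even_or_odd n with he | ho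
      · obtain ⟨m, hm⟩ := he
        have hn2 : n = 2 * m := by omega
        subst hn2
        have h4 : 2 * m / 2 = m := by omega
        have h5 : 2 * m % 2 = 0 := by omega
        rw [aux_card_even, ih m (by omega), h4, h5]
        simp
      · obtain ⟨m, hm⟩ := ho
        subst hm
        rw [aux_card_odd, ih m (by omega)]
        have h2 : (2 * m + 1) % 2 = 1 := by omega
        rw [h2, if_pos rfl]
        have h3 : (2 * m + 1) / 2 = m := by omega
        rw [h3, pow_add, pow_one]

/-- For all positive integers `n` and `r`, the number of `r`-tuples
`(a_1, …, a_r)` of nonnegative integers summing to `n` whose multinomial coefficient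
`n!/(a_1!⋯a_r!)` is odd equals `r ^ b(n)`, where `b(n)` is the number of ones in the
binary expansion of `n`. -/
theorem stmt0 (n r : ℕ) (hn : 0 < n) (hr : 0 < r) :
    ((Finset.Nat.antidiagonalTuple r n).filter
        (fun a => Odd (Nat.multinomial Finset.univ a))).card
      = r ^ ((Nat.digits 2 n).count 1) := by
  exact aux_main r n
end

section
/- Let (a_1, …, a_r) be an r-tuple of nonnegative integers with a_1 + ⋯ + a_r = n. Suppose there exist indices i ≠ j such that (bin(a_i) ∖ {ord(a_i)}) ∩ (bin(a_j) ∖ {ord(a_j)}) is nonempty. Then for every k with 1 ≤ k ≤ r, the multinomial coefficient C(n−2; a_1, …, a_k − 2, …, a_r) is even, and for all indices l < m, the multinomial coefficient C(n−2; a_1, …, a_l − 1, …, a_m − 1, …, a_r) is even. -/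
open Finset

/-- Multinomial coefficient of an integer tuple; by convention `0` if any entry is negative. -/
def multinomialZ {r : ℕ} (a : Fin r → ℤ) : ℕ :=
  if ∀ i, 0 ≤ a i then Nat.multinomial Finset.univ (fun i => (a i).toNat) else 0

/-- The multinomial coefficient in which entry `k` is decreased by 2. -/
def sub2 {r : ℕ} (a : Fin r → ℕ) (k : Fin r) : ℕ :=
  multinomialZ (fun i => (a i : ℤ) - if i = k then 2 else 0)

/-- The multinomial coefficient in which entries `l` and `m` are each decreased by 1. -/
def sub11 {r : ℕ} (a : Fin r → ℕ) (l m : Fin r) : ℕ :=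
  multinomialZ (fun i => (a i : ℤ) - (if i = l then 1 else 0) - (if i = m then 1 else 0))

/-- The set of exponents appearing in the binary expansion of `m`. -/
def binSet (m : ℕ) : Set ℕ := {i | m.testBit i}


/-- If `k` has a bit that `n` lacks, then `choose n k` is even. -/
lemma aux_choose_even_of_bit : ∀ (t n k : ℕ), k.testBit t → ¬ n.testBit t → n.choose k % 2 = 0 := by
  intro t
  induction t with
  | zero =>
    intro n k hk hn
    have h : n.choose k % 2 = (n % 2).choose (k % 2) * (n / 2).choose (k / 2) % 2 :=
      @Choose.choose_modEq_choose_mod_mul_choose_div_nat n k 2 ⟨Nat.prime_two⟩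
    have hk1 : k % 2 = 1 := by simpa [Nat.testBit_zero] using hk
    have hn1 : ¬ n % 2 = 1 := by simpa [Nat.testBit_zero] using hn
    have hn0 : n % 2 = 0 := by omega
    rw [hk1, hn0] at h
    simpa using h
  | succ t ih =>
    intro n k hk hn
    have h : n.choose k % 2 = (n % 2).choose (k % 2) * (n / 2).choose (k / 2) % 2 :=
      @Choose.choose_modEq_choose_mod_mul_choose_div_nat n k 2 ⟨Nat.prime_two⟩
    have h2 : (n / 2).choose (k / 2) % 2 = 0 := by
      refine ih (n / 2) (k / 2) ?_ ?_
      · rwa [← Nat.testBit_succ]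
      · rwa [← Nat.testBit_succ]
    rw [Nat.mul_mod, h2, mul_zero, Nat.zero_mod] at h
    exact h

/-- bits below `t` disjoint implies low parts sum below `2^t`. -/
lemma aux_low (a b : ℕ) : ∀ t : ℕ, (∀ s < t, ¬(a.testBit s ∧ b.testBit s)) →
    a % 2 ^ t + b % 2 ^ t < 2 ^ t := by
  intro t
  induction t with
  | zero => intro _; simp [Nat.mod_one]
  | succ t ih =>
    intro hdisj
    have h1 : a % 2 ^ t + b % 2 ^ t < 2 ^ t := ih (fun s hs => hdisj s (by omega))
    have ha : a % 2 ^ (t + 1) = a % 2 ^ t + 2 ^ t * (a / 2 ^ t % 2) := by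
      rw [pow_succ, Nat.mod_mul]
    have hb : b % 2 ^ (t + 1) = b % 2 ^ t + 2 ^ t * (b / 2 ^ t % 2) := by
      rw [pow_succ, Nat.mod_mul]
    have htd := hdisj t (by omega)
    rw [Nat.testBit_eq_decide_div_mod_eq, Nat.testBit_eq_decide_div_mod_eq] at htd
    have ha2 : a / 2 ^ t % 2 < 2 := Nat.mod_lt _ (by norm_num)
    have hb2 : b / 2 ^ t % 2 < 2 := Nat.mod_lt _ (by norm_num)
    have : a / 2 ^ t % 2 + b / 2 ^ t % 2 ≤ 1 := by
      by_contra hc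
      exact htd ⟨by simp; omega, by simp; omega⟩
    have key : 2 ^ t * (a / 2 ^ t % 2) + 2 ^ t * (b / 2 ^ t % 2) ≤ 2 ^ t := by
      calc 2 ^ t * (a / 2 ^ t % 2) + 2 ^ t * (b / 2 ^ t % 2)
          = 2 ^ t * (a / 2 ^ t % 2 + b / 2 ^ t % 2) := by ring
        _ ≤ 2 ^ t * 1 := Nat.mul_le_mul_left _ this
        _ = 2 ^ t := by ring
    rw [ha, hb, pow_succ]
    omega

/-- at the least common bit of `a` and `b`, the sum `a+b` has bit 0. -/
lemma aux_carry (a b t : ℕ) (hab : a.testBit t ∧ b.testBit t)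
    (hlow : ∀ s < t, ¬(a.testBit s ∧ b.testBit s)) : ¬ (a + b).testBit t := by
  have hsum : (a + b) / 2 ^ t = a / 2 ^ t + b / 2 ^ t := by
    have hpos : 0 < 2 ^ t := pow_pos (by norm_num) t
    conv_lhs => rw [← Nat.div_add_mod a (2 ^ t), ← Nat.div_add_mod b (2 ^ t)]
    have hlt := aux_low a b t hlow
    rw [show 2 ^ t * (a / 2 ^ t) + a % 2 ^ t + (2 ^ t * (b / 2 ^ t) + b % 2 ^ t)
        = 2 ^ t * (a / 2 ^ t + b / 2 ^ t) + (a % 2 ^ t + b % 2 ^ t) by ring,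
      Nat.mul_add_div hpos, Nat.div_eq_of_lt hlt, add_zero]
  obtain ⟨ha, hb⟩ := hab
  rw [Nat.testBit_eq_decide_div_mod_eq] at ha hb ⊢
  simp only [decide_eq_true_eq] at ha hb ⊢
  rw [hsum]
  omega

/-- If `a` and `b` share a bit, `(a+b).choose a` is even. -/
lemma aux_choose_even (a b : ℕ) (t : ℕ) (ha : a.testBit t) (hb : b.testBit t) :
    (a + b).choose a % 2 = 0 := by
  have hex : ∃ s, a.testBit s ∧ b.testBit s := ⟨t, ha, hb⟩
  classical
  let t0 := Nat.find hex
  have ht0 := Nat.find_spec hex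
  have hmin : ∀ s < t0, ¬(a.testBit s ∧ b.testBit s) := fun s hs => Nat.find_min hex hs
  exact aux_choose_even_of_bit t0 (a + b) a ht0.1 (aux_carry a b t0 ht0 hmin)



/-- If two distinct entries share a binary digit, the multinomial coefficient is even. -/
lemma aux_mult_even {r : ℕ} (c : Fin r → ℕ) (i j : Fin r) (hij : i ≠ j) (t : ℕ)
    (hi : (c i).testBit t) (hj : (c j).testBit t) :
    Even (Nat.multinomial Finset.univ c) := by
  classical
  set d : Fin r → ℕ := Function.update (Function.update c j 0) i (c i + c j) with hd
  have hdi : d i = c i + c j := by simp [hd]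
  have hdj : d j = 0 := by simp [hd, Function.update_of_ne hij.symm]
  have hdk : ∀ k, k ≠ i → k ≠ j → d k = c k := by
    intro k hki hkj
    simp [hd, Function.update_of_ne hki, Function.update_of_ne hkj]
  have hji : j ∈ (Finset.univ : Finset (Fin r)).erase i := by
    simp [Finset.mem_erase, hij.symm]
  -- sums are equal
  have hsum : ∑ k, d k = ∑ k, c k := by
    rw [← Finset.add_sum_erase _ d (Finset.mem_univ i),
        ← Finset.add_sum_erase _ c (Finset.mem_univ i),
        ← Finset.add_sum_erase _ d hji, ← Finset.add_sum_erase _ c hji,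
        hdi, hdj]
    have : ∑ k ∈ (Finset.univ.erase i).erase j, d k = ∑ k ∈ (Finset.univ.erase i).erase j, c k := by
      apply Finset.sum_congr rfl
      intro k hk
      simp only [Finset.mem_erase] at hk
      exact hdk k hk.2.1 hk.1
    rw [this]; ring
  -- the key factorization
  have key : (c i + c j).choose (c i) * Nat.multinomial Finset.univ d
      = Nat.multinomial Finset.univ c := by
    have hpos : 0 < ∏ k, (c k).factorial :=
      Finset.prod_pos fun k _ => Nat.factorial_pos _
    apply Nat.eq_of_mul_eq_mul_left hpos
    rw [Nat.multinomial_spec]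
    have hprodc : ∏ k, (c k).factorial
        = (c i).factorial * ((c j).factorial * ∏ k ∈ (Finset.univ.erase i).erase j, (c k).factorial) := by
      rw [← Finset.mul_prod_erase _ _ (Finset.mem_univ i), ← Finset.mul_prod_erase _ _ hji]
    have hprodd : ∏ k, (d k).factorial
        = (c i + c j).factorial * ∏ k ∈ (Finset.univ.erase i).erase j, (c k).factorial := by
      rw [← Finset.mul_prod_erase _ _ (Finset.mem_univ i), hdi,
          ← Finset.mul_prod_erase _ _ hji, hdj]
      have : ∏ k ∈ (Finset.univ.erase i).erase j, (d k).factorial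
          = ∏ k ∈ (Finset.univ.erase i).erase j, (c k).factorial := by
        apply Finset.prod_congr rfl
        intro k hk
        simp only [Finset.mem_erase] at hk
        rw [hdk k hk.2.1 hk.1]
      rw [this, Nat.factorial_zero, one_mul]
    have hch : (c i + c j).choose (c i) * ((c j).factorial * (c i).factorial)
        = (c i + c j).factorial := by
      have := Nat.add_choose_mul_factorial_mul_factorial (c j) (c i)
      rw [add_comm (c j) (c i)] at this
      linarith [this]
    calc (∏ k, (c k).factorial) * ((c i + c j).choose (c i) * Nat.multinomial Finset.univ d)
        = ((c i + c j).choose (c i) * ((c j).factorial * (c i).factorial))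
            * ((∏ k ∈ (Finset.univ.erase i).erase j, (c k).factorial)
              * Nat.multinomial Finset.univ d) := by rw [hprodc]; ring
      _ = (∏ k, (d k).factorial) * Nat.multinomial Finset.univ d := by rw [hch, hprodd]; ring
      _ = (∑ k, d k).factorial := Nat.multinomial_spec _ _
      _ = (∑ k, c k).factorial := by rw [hsum]
  rw [← key]
  have := aux_choose_even (c i) (c j) t hi hj
  have h2 : 2 ∣ (c i + c j).choose (c i) := Nat.dvd_of_mod_eq_zero this
  exact (even_iff_two_dvd.mpr h2).mul_right _


lemma aux_ne_zero {x t : ℕ} (h : x.testBit t) : x ≠ 0 := by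
  intro h0; rw [h0, Nat.zero_testBit] at h; exact Bool.false_ne_true h

lemma aux_val_le {x t : ℕ} (h : x.testBit t) : padicValNat 2 x ≤ t := by
  by_contra hc
  push_neg at hc
  have hdvd : 2 ^ (t + 1) ∣ x :=
    dvd_trans (pow_dvd_pow 2 (by omega)) pow_padicValNat_dvd
  obtain ⟨m, hm⟩ := hdvd
  rw [Nat.testBit_eq_decide_div_mod_eq, decide_eq_true_eq] at h
  have hm' : x = 2 ^ t * (2 * m) := by rw [hm, pow_succ]; ring
  have : x / 2 ^ t = 2 * m := by
    rw [hm', Nat.mul_div_cancel_left _ (pow_pos (by norm_num) t)]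
  omega

lemma aux_bit_val {x : ℕ} (hx : x ≠ 0) : x.testBit (padicValNat 2 x) := by
  set v := padicValNat 2 x
  obtain ⟨m, hm⟩ : 2 ^ v ∣ x := pow_padicValNat_dvd
  have hnd : ¬ 2 ^ (v + 1) ∣ x := pow_succ_padicValNat_not_dvd hx
  have hq : x / 2 ^ v = m := by
    rw [hm, Nat.mul_div_cancel_left _ (pow_pos (by norm_num) v)]
  rw [Nat.testBit_eq_decide_div_mod_eq, decide_eq_true_eq, hq]
  rcases Nat.mod_two_eq_zero_or_one m with h | h
  · exfalso
    obtain ⟨u, hu⟩ : 2 ∣ m := Nat.dvd_of_mod_eq_zero h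
    exact hnd ⟨u, by rw [hm, hu, pow_succ]; ring⟩
  · exact h

lemma aux_pred_high {x t : ℕ} (hx : x ≠ 0) (h : padicValNat 2 x < t) :
    (x - 1).testBit t = x.testBit t := by
  have hnd : ¬ 2 ^ t ∣ x := fun hd => absurd ((padicValNat_dvd_iff_le hx).mp hd) (by omega)
  have hpos : 0 < 2 ^ t := pow_pos (by norm_num) t
  have hr : x % 2 ^ t ≠ 0 := fun h0 => hnd (Nat.dvd_of_mod_eq_zero h0)
  have hrlt : x % 2 ^ t < 2 ^ t := Nat.mod_lt _ hpos
  set q := x / 2 ^ t with hq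
  set rr := x % 2 ^ t with hrr
  have hxe : x = 2 ^ t * q + rr := (Nat.div_add_mod x (2 ^ t)).symm
  have hx1 : x - 1 = 2 ^ t * q + (rr - 1) := by omega
  have key : (x - 1) / 2 ^ t = q := by
    rw [hx1, Nat.mul_add_div hpos, Nat.div_eq_of_lt (show rr - 1 < 2 ^ t by omega), add_zero]
  rw [Nat.testBit_eq_decide_div_mod_eq, Nat.testBit_eq_decide_div_mod_eq, key, ← hq]

lemma aux_pred_low {x s : ℕ} (hx : x ≠ 0) (h : s < padicValNat 2 x) :
    (x - 1).testBit s := by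
  have hdvd : 2 ^ (s + 1) ∣ x :=
    dvd_trans (pow_dvd_pow 2 (by omega)) pow_padicValNat_dvd
  obtain ⟨m, hm⟩ := hdvd
  have hm0 : m ≠ 0 := by rintro rfl; simp at hm; exact hx hm
  obtain ⟨m', rfl⟩ : ∃ m', m = m' + 1 := ⟨m - 1, by omega⟩
  have hp : 0 < 2 ^ s := pow_pos (by norm_num) s
  have e1 : x = 2 * (2 ^ s * m') + 2 * 2 ^ s := by rw [hm, pow_succ]; ring
  have e3 : 2 ^ s * (2 * (m' + 1) - 1) = 2 * (2 ^ s * m') + 2 ^ s := by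
    have h4 : 2 * (m' + 1) - 1 = 2 * m' + 1 := by omega
    rw [h4]; ring
  have hx1 : x - 1 = 2 ^ s * (2 * (m' + 1) - 1) + (2 ^ s - 1) := by rw [e3]; omega
  have key : (x - 1) / 2 ^ s = 2 * (m' + 1) - 1 := by
    rw [hx1, Nat.mul_add_div hp, Nat.div_eq_of_lt (by omega), add_zero]
  rw [Nat.testBit_eq_decide_div_mod_eq, decide_eq_true_eq, key]
  omega

/-- Key bit lemma for subtracting 2. -/
lemma aux_sub2_bit {x y t : ℕ} (hxt : x.testBit t) (hvx : padicValNat 2 x < t)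
    (hyt : y.testBit t) (hvy : padicValNat 2 y < t) :
    ∃ s, (x - 2).testBit s ∧ y.testBit s := by
  have hx0 : x ≠ 0 := aux_ne_zero hxt
  have hxge : 2 ^ t ≤ x := Nat.ge_two_pow_of_testBit hxt
  have ht0 : 0 < t := by omega
  have hxge2 : 2 ≤ x := by
    have h21 : 2 ^ 1 ≤ 2 ^ t := Nat.pow_le_pow_right (by norm_num) ht0
    omega
  have hsub : x - 1 - 1 = x - 2 := by omega
  by_cases heven : 2 ∣ x
  · -- x even, so x - 1 is odd and bit t survives twice
    have hv1 : 1 ≤ padicValNat 2 x :=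
      one_le_padicValNat_of_dvd hx0 heven
    have h1 : (x - 1).testBit t := by rw [aux_pred_high hx0 hvx]; exact hxt
    have hodd : ¬ 2 ∣ (x - 1) := by omega
    have hval0 : padicValNat 2 (x - 1) = 0 := padicValNat.eq_zero_of_not_dvd hodd
    have h2 : (x - 2).testBit t := by
      rw [← hsub, aux_pred_high (by omega) (by omega)]
      exact h1
    exact ⟨t, h2, hyt⟩
  · -- x odd
    have h1 : (x - 1).testBit t := by rw [aux_pred_high hx0 hvx]; exact hxt
    have hx10 : x - 1 ≠ 0 := by omega
    have he_le : padicValNat 2 (x - 1) ≤ t := aux_val_le h1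
    by_cases hcase : padicValNat 2 (x - 1) = t
    · -- borrow reaches bit t; all lower bits of x-2 are set
      have hw : padicValNat 2 y < padicValNat 2 (x - 1) := by omega
      have h2 : (x - 2).testBit (padicValNat 2 y) := by
        rw [← hsub]; exact aux_pred_low hx10 hw
      exact ⟨padicValNat 2 y, h2, aux_bit_val (aux_ne_zero hyt)⟩
    · have h2 : (x - 2).testBit t := by
        rw [← hsub, aux_pred_high hx10 (by omega)]
        exact h1
      exact ⟨t, h2, hyt⟩

/-- If there exist indices `i ≠ j` with
`(bin(a_i) ∖ {ord(a_i)}) ∩ (bin(a_j) ∖ {ord(a_j)}) ≠ ∅`, then every multinomial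
coefficient `C(n-2; a_1, …, a_k - 2, …, a_r)` is even, and every
`C(n-2; a_1, …, a_l - 1, …, a_m - 1, …, a_r)` with `l < m` is even. -/
theorem stmt3 {r n : ℕ} (a : Fin r → ℕ) (h : ∑ i, a i = n)
    (hyp : ∃ i j : Fin r, i ≠ j ∧
      ((binSet (a i) \ {padicValNat 2 (a i)}) ∩
        (binSet (a j) \ {padicValNat 2 (a j)})).Nonempty) :
    (∀ k : Fin r, Even (sub2 a k)) ∧
      (∀ l m : Fin r, l < m → Even (sub11 a l m)) := by
  classical
  obtain ⟨i, j, hij, t, ht⟩ := hyp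
  simp only [Set.mem_inter_iff, Set.mem_diff, Set.mem_singleton_iff, binSet,
    Set.mem_setOf_eq] at ht
  obtain ⟨⟨hbi, hni⟩, hbj, hnj⟩ := ht
  have hvi : padicValNat 2 (a i) < t := lt_of_le_of_ne (aux_val_le hbi) (Ne.symm hni)
  have hvj : padicValNat 2 (a j) < t := lt_of_le_of_ne (aux_val_le hbj) (Ne.symm hnj)
  constructor
  · -- sub2
    intro k
    rw [sub2, multinomialZ]
    split_ifs with hpos
    · set c : Fin r → ℕ :=
        fun i' => (((a i' : ℤ) - if i' = k then 2 else 0)).toNat with hc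
      have hck : c k = a k - 2 := by
        simp only [hc, if_pos rfl]
        exact_mod_cast Int.toNat_sub (a k) 2
      have hcne : ∀ i', i' ≠ k → c i' = a i' := by
        intro i' hi'
        simp [hc, if_neg hi']
      by_cases hki : k = i
      · subst hki
        obtain ⟨s, hs1, hs2⟩ := aux_sub2_bit hbi hvi hbj hvj
        exact aux_mult_even c k j hij s (by rwa [hck]) (by rwa [hcne j hij.symm])
      · by_cases hkj : k = j
        · subst hkj
          obtain ⟨s, hs1, hs2⟩ := aux_sub2_bit hbj hvj hbi hvi
          exact aux_mult_even c i k hij s (by rwa [hcne i fun h => hki h.symm])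
            (by rwa [hck])
        · exact aux_mult_even c i j hij t
            (by rwa [hcne i fun h => hki h.symm]) (by rwa [hcne j fun h => hkj h.symm])
    · exact Even.zero
  · -- sub11
    intro l m hlm
    have hlm' : l ≠ m := ne_of_lt hlm
    rw [sub11, multinomialZ]
    split_ifs with hpos
    · set c : Fin r → ℕ :=
        fun i' => (((a i' : ℤ) - (if i' = l then 1 else 0) - if i' = m then 1 else 0)).toNat
        with hc
      have hbit : ∀ i', (a i').testBit t → padicValNat 2 (a i') < t → (c i').testBit t := by
        intro i' hb hv
        have hne0 : a i' ≠ 0 := aux_ne_zero hb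
        by_cases h1 : i' = l
        · have hcv : c i' = a i' - 1 := by
            simp only [hc, if_pos h1, if_neg (h1 ▸ hlm')]
            rw [sub_zero]
            exact_mod_cast Int.toNat_sub (a i') 1
          rw [hcv, aux_pred_high hne0 hv]
          exact hb
        · by_cases h2 : i' = m
          · have hcv : c i' = a i' - 1 := by
              simp only [hc, if_neg h1, if_pos h2, sub_zero]
              exact_mod_cast Int.toNat_sub (a i') 1
            rw [hcv, aux_pred_high hne0 hv]
            exact hb
          · have hcv : c i' = a i' := by simp [hc, if_neg h1, if_neg h2]
            rwa [hcv]
      exact aux_mult_even c i j hij t (hbit i hbi hvi) (hbit j hbj hvj)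
    · exact Even.zero
end

section
/- Let (a_1, …, a_r) be an r-tuple of nonnegative integers with a_1 + ⋯ + a_r = n. Suppose at least three of the a_k are congruent to 2 modulo 4. Then for every k with 1 ≤ k ≤ r, the multinomial coefficient C(n−2; a_1, …, a_k − 2, …, a_r) is even, and for all indices l < m, the multinomial coefficient C(n−2; a_1, …, a_l − 1, …, a_m − 1, …, a_r) is even. -/
private lemma lucas2 (n k : ℕ) :
    n.choose k % 2 = ((n % 2).choose (k % 2) * ((n / 2).choose (k / 2))) % 2 :=
  @Choose.choose_modEq_choose_mod_mul_choose_div_nat n k 2 ⟨Nat.prime_two⟩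

private lemma even_choose_of_testBit :
    ∀ (t x y : ℕ), x.testBit t → y.testBit t → Even ((x + y).choose x) := by
  intro t
  induction t with
  | zero =>
    intro x y hx hy
    rw [Nat.testBit_eq_decide_div_mod_eq] at hx hy
    simp only [pow_zero, Nat.div_one, decide_eq_true_eq] at hx hy
    rw [Nat.even_iff, lucas2]
    have h0 : (x + y) % 2 = 0 := by omega
    rw [h0, hx]
    simp
  | succ t ih =>
    intro x y hx hy
    by_cases hodd : x % 2 = 1 ∧ y % 2 = 1
    · rw [Nat.even_iff, lucas2]
      have h0 : (x + y) % 2 = 0 := by omega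
      rw [h0, hodd.1]
      simp
    · rw [Nat.testBit_succ] at hx hy
      have hdiv : (x + y) / 2 = x / 2 + y / 2 := by omega
      have hev := ih (x / 2) (y / 2) hx hy
      rw [Nat.even_iff] at hev ⊢
      rw [lucas2, hdiv, Nat.mul_mod, hev]
      simp

private lemma even_multinomial {α : Type*} [DecidableEq α] {s : Finset α} {f : α → ℕ} {i j : α}
    (hi : i ∈ s) (hj : j ∈ s) (hij : i ≠ j) (t : ℕ)
    (h1 : (f i).testBit t) (h2 : (f j).testBit t) :
    Even (Nat.multinomial s f) := by
  have hjs : j ∈ s.erase i := Finset.mem_erase.mpr ⟨hij.symm, hj⟩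
  rw [← Finset.insert_erase hi, Nat.multinomial_insert (Finset.notMem_erase i _),
    ← Finset.insert_erase hjs, Nat.multinomial_insert (Finset.notMem_erase j _),
    Finset.sum_insert (Finset.notMem_erase j _)]
  set T := ∑ x ∈ (s.erase i).erase j, f x with hT
  have key : (f i + f j).choose (f i) ∣
      (f i + (f j + T)).choose (f i) * (f j + T).choose (f j) := by
    have hc := Nat.choose_mul (n := f i + f j + T) (k := f i + f j) (s := f i)
      (by omega)
    have e1 : f i + f j + T - f i = f j + T := by omega
    have e2 : f i + f j - f i = f j := by omega
    rw [e1, e2] at hc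
    have e3 : f i + (f j + T) = f i + f j + T := by omega
    rw [e3, ← hc]
    exact Dvd.intro_left _ rfl
  have hev : Even ((f i + f j).choose (f i)) := even_choose_of_testBit t _ _ h1 h2
  rw [← mul_assoc]
  have h2dvd : 2 ∣ (f i + f j).choose (f i) := even_iff_two_dvd.mp hev
  exact even_iff_two_dvd.mpr
    (h2dvd.trans (key.mul_right (Nat.multinomial ((s.erase i).erase j) f)))

/-- If at least three of the `a_k` are congruent to `2` modulo `4`, then
every `C(n-2; a_1, …, a_k - 2, …, a_r)` is even, and every
`C(n-2; a_1, …, a_l - 1, …, a_m - 1, …, a_r)` with `l < m` is even. -/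
theorem stmt4 {r n : ℕ} (a : Fin r → ℕ) (h : ∑ i, a i = n)
    (hyp : 3 ≤ (Finset.univ.filter (fun k : Fin r => a k % 4 = 2)).card) :
    (∀ k : Fin r, Even (sub2 a k)) ∧
      (∀ l m : Fin r, l < m → Even (sub11 a l m)) := by
  set S := Finset.univ.filter (fun k : Fin r => a k % 4 = 2) with hS
  have hmemS : ∀ p, p ∈ S ↔ a p % 4 = 2 := by
    intro p; simp [hS]
  constructor
  · intro k
    unfold sub2 multinomialZ
    split_ifs with hpos
    · have hcard : 1 < (S.erase k).card := by
        have := Finset.pred_card_le_card_erase (s := S) (a := k)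
        omega
      obtain ⟨p, hp, q, hq, hpq⟩ := Finset.one_lt_card.mp hcard
      obtain ⟨hpk, hpS⟩ := Finset.mem_erase.mp hp
      obtain ⟨hqk, hqS⟩ := Finset.mem_erase.mp hq
      rw [hmemS] at hpS hqS
      apply even_multinomial (Finset.mem_univ p) (Finset.mem_univ q) hpq 1
      · have e : ((a p : ℤ) - if p = k then 2 else 0).toNat = a p := by
          rw [if_neg hpk]; omega
        rw [e, Nat.testBit_eq_decide_div_mod_eq]
        simp only [pow_one, decide_eq_true_eq]
        omega
      · have e : ((a q : ℤ) - if q = k then 2 else 0).toNat = a q := by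
          rw [if_neg hqk]; omega
        rw [e, Nat.testBit_eq_decide_div_mod_eq]
        simp only [pow_one, decide_eq_true_eq]
        omega
    · exact Even.zero
  · intro l m hlm
    have hlm' : l ≠ m := Fin.ne_of_lt hlm
    unfold sub11 multinomialZ
    split_ifs with hpos
    · by_cases hboth : a l % 4 = 2 ∧ a m % 4 = 2
      · apply even_multinomial (Finset.mem_univ l) (Finset.mem_univ m) hlm' 0
        · have e : ((a l : ℤ) - (if l = l then 1 else 0) - (if l = m then 1 else 0)).toNat
              = a l - 1 := by
            rw [if_pos rfl, if_neg hlm']; omega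
          rw [e, Nat.testBit_eq_decide_div_mod_eq]
          simp only [pow_zero, Nat.div_one, decide_eq_true_eq]
          omega
        · have e : ((a m : ℤ) - (if m = l then 1 else 0) - (if m = m then 1 else 0)).toNat
              = a m - 1 := by
            rw [if_neg hlm'.symm, if_pos rfl]; omega
          rw [e, Nat.testBit_eq_decide_div_mod_eq]
          simp only [pow_zero, Nat.div_one, decide_eq_true_eq]
          omega
      · have hout : l ∉ S ∨ m ∉ S := by
          rw [hmemS, hmemS]; tauto
        have hcard : 1 < ((S.erase l).erase m).card := by
          rcases hout with hl | hm
          · rw [Finset.erase_eq_of_notMem hl]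
            have := Finset.pred_card_le_card_erase (s := S) (a := m)
            omega
          · have hm' : m ∉ S.erase l := fun hc => hm (Finset.mem_of_mem_erase hc)
            rw [Finset.erase_eq_of_notMem hm']
            have := Finset.pred_card_le_card_erase (s := S) (a := l)
            omega
        obtain ⟨p, hp, q, hq, hpq⟩ := Finset.one_lt_card.mp hcard
        obtain ⟨hpm, hp'⟩ := Finset.mem_erase.mp hp
        obtain ⟨hpl, hpS⟩ := Finset.mem_erase.mp hp'
        obtain ⟨hqm, hq'⟩ := Finset.mem_erase.mp hq
        obtain ⟨hql, hqS⟩ := Finset.mem_erase.mp hq'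
        rw [hmemS] at hpS hqS
        apply even_multinomial (Finset.mem_univ p) (Finset.mem_univ q) hpq 1
        · have e : ((a p : ℤ) - (if p = l then 1 else 0) - (if p = m then 1 else 0)).toNat
              = a p := by
            rw [if_neg hpl, if_neg hpm]; omega
          rw [e, Nat.testBit_eq_decide_div_mod_eq]
          simp only [pow_one, decide_eq_true_eq]
          omega
        · have e : ((a q : ℤ) - (if q = l then 1 else 0) - (if q = m then 1 else 0)).toNat
              = a q := by
            rw [if_neg hql, if_neg hqm]; omega
          rw [e, Nat.testBit_eq_decide_div_mod_eq]
          simp only [pow_one, decide_eq_true_eq]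
          omega
    · exact Even.zero
end

section
/- Let (a_1, …, a_r) be an r-tuple of nonnegative integers with a_1 + ⋯ + a_r = n. Suppose there exist three distinct indices i, j, k such that a_i ≡ 3, a_j ≡ 2 and a_k ≡ 1 (mod 4). Then for every k with 1 ≤ k ≤ r, the multinomial coefficient C(n−2; a_1, …, a_k − 2, …, a_r) is even, and for all indices l < m, the multinomial coefficient C(n−2; a_1, …, a_l − 1, …, a_m − 1, …, a_r) is even. -/
/-- If both `x` and `y` are odd, `(x+y).choose x` is even (carry at bit 0). -/
lemma even_choose_of_odd_odd {x y : ℕ} (hx : x % 2 = 1) (hy : y % 2 = 1) :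
    2 ∣ (x + y).choose x := by
  haveI : Fact (Nat.Prime 2) := ⟨Nat.prime_two⟩
  have h := Choose.choose_modEq_choose_mod_mul_choose_div_nat (n := x + y) (k := x) (p := 2)
  have h2 : (x + y) % 2 = 0 := by omega
  rw [Nat.ModEq, h2, hx] at h
  norm_num at h
  omega

/-- If bit 1 of `x` and of `y` are both set, `(x+y).choose x` is even. -/
lemma even_choose_of_bit1 {x y : ℕ} (hx : x / 2 % 2 = 1) (hy : y / 2 % 2 = 1) :
    2 ∣ (x + y).choose x := by
  by_cases hb : x % 2 = 1 ∧ y % 2 = 1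
  · exact even_choose_of_odd_odd hb.1 hb.2
  · haveI : Fact (Nat.Prime 2) := ⟨Nat.prime_two⟩
    have h := Choose.choose_modEq_choose_mod_mul_choose_div_nat (n := x + y) (k := x) (p := 2)
    have hdiv : (x + y) / 2 = x / 2 + y / 2 := by omega
    rw [Nat.ModEq, hdiv] at h
    have h3 : 2 ∣ (x / 2 + y / 2).choose (x / 2) := even_choose_of_odd_odd hx hy
    have h4 : 2 ∣ ((x + y) % 2).choose (x % 2) * (x / 2 + y / 2).choose (x / 2) :=
      h3.mul_left _
    omega

/-- The binomial coefficient of two parts divides the multinomial coefficient. -/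
lemma choose_dvd_multinomial {α : Type*} [DecidableEq α] (s : Finset α) (f : α → ℕ)
    (p q : α) (hp : p ∈ s) (hq : q ∈ s) (hpq : p ≠ q) :
    (f p + f q).choose (f p) ∣ Nat.multinomial s f := by
  set t := (s.erase p).erase q with ht
  have hq' : q ∈ s.erase p := Finset.mem_erase.2 ⟨Ne.symm hpq, hq⟩
  have hqt : q ∉ t := Finset.notMem_erase _ _
  have hpt : p ∉ insert q t := by
    simp only [Finset.mem_insert, ht]
    rintro (rfl | hc)
    · exact hpq rfl
    · exact (Finset.notMem_erase p s) (Finset.mem_of_mem_erase hc)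
  have hs : s = insert p (insert q t) := by
    rw [ht, Finset.insert_erase hq', Finset.insert_erase hp]
  rw [hs, Nat.multinomial_insert hpt f, Nat.multinomial_insert hqt f]
  set T := ∑ i ∈ t, f i with hT
  have hsum : f p + ∑ i ∈ insert q t, f i = f p + (f q + T) := by
    rw [Finset.sum_insert hqt]
  rw [hsum]
  have key : (f p + (f q + T)).choose (f p + f q) * (f p + f q).choose (f p) =
      (f p + (f q + T)).choose (f p) * (f q + T).choose (f q) := by
    have := Nat.choose_mul (n := f p + (f q + T)) (k := f p + f q) (s := f p)
      (by omega)
    simpa [Nat.add_sub_cancel_left, show f p + (f q + T) - f p = f q + T by omega,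
      show f p + f q - f p = f q by omega] using this
  have hdvd : (f p + f q).choose (f p) ∣
      (f p + (f q + T)).choose (f p) * (f q + T).choose (f q) :=
    ⟨(f p + (f q + T)).choose (f p + f q), by rw [← key]; ring⟩
  simpa [mul_assoc] using hdvd.mul_right (Nat.multinomial t f)

/-- Key lemma: the multinomial of `b` over `univ` is even when two distinct entries
share binary bit 0 or share binary bit 1. -/
lemma even_multinomial_of_pair {r : ℕ} (b : Fin r → ℕ) (p q : Fin r) (hpq : p ≠ q)
    (H : (b p % 2 = 1 ∧ b q % 2 = 1) ∨ (b p / 2 % 2 = 1 ∧ b q / 2 % 2 = 1)) :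
    Even (Nat.multinomial Finset.univ b) := by
  rw [Nat.even_iff, ← Nat.dvd_iff_mod_eq_zero]
  refine dvd_trans ?_ (choose_dvd_multinomial Finset.univ b p q (Finset.mem_univ p)
    (Finset.mem_univ q) hpq)
  rcases H with ⟨h1, h2⟩ | ⟨h1, h2⟩
  · exact even_choose_of_odd_odd h1 h2
  · exact even_choose_of_bit1 h1 h2

/-- If there exist three distinct indices `i, j, k` with
`a_i ≡ 3`, `a_j ≡ 2`, `a_k ≡ 1 (mod 4)`, then every
`C(n-2; a_1, …, a_k - 2, …, a_r)` is even, and every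
`C(n-2; a_1, …, a_l - 1, …, a_m - 1, …, a_r)` with `l < m` is even. -/
theorem stmt5 {r n : ℕ} (a : Fin r → ℕ) (h : ∑ i, a i = n)
    (hyp : ∃ i j k : Fin r, i ≠ j ∧ i ≠ k ∧ j ≠ k ∧
      a i % 4 = 3 ∧ a j % 4 = 2 ∧ a k % 4 = 1) :
    (∀ k : Fin r, Even (sub2 a k)) ∧
      (∀ l m : Fin r, l < m → Even (sub11 a l m)) := by
  obtain ⟨i, j, k, hij, hik, hjk, hi, hj, hk⟩ := hyp
  constructor
  · intro t
    unfold sub2 multinomialZ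
    split_ifs with hpos
    · refine even_multinomial_of_pair _ i k hik (Or.inl ⟨?_, ?_⟩)
      · have h0 := hpos i
        dsimp only at h0 ⊢
        split_ifs at h0 ⊢ with hcase <;> omega
      · have h0 := hpos k
        dsimp only at h0 ⊢
        split_ifs at h0 ⊢ with hcase <;> omega
    · exact Even.zero
  · intro l m hlm
    have hlm' : l ≠ m := ne_of_lt hlm
    unfold sub11 multinomialZ
    split_ifs with hpos
    · set b : Fin r → ℕ := fun x =>
        ((a x : ℤ) - (if x = l then 1 else 0) - (if x = m then 1 else 0)).toNat with hb
      have hbval : ∀ x : Fin r, ∃ d : ℕ, a x = b x + d ∧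
          (d = 0 ∨ (d = 1 ∧ (x = l ∨ x = m))) := by
        intro x
        have h0 := hpos x
        dsimp only at h0
        by_cases h1 : x = l <;> by_cases h2 : x = m
        · exact absurd (h1 ▸ h2) (h1 ▸ hlm')
        · refine ⟨1, ?_, Or.inr ⟨rfl, Or.inl h1⟩⟩
          simp only [hb, if_pos h1, if_neg h2] at h0 ⊢
          omega
        · refine ⟨1, ?_, Or.inr ⟨rfl, Or.inr h2⟩⟩
          simp only [hb, if_neg h1, if_pos h2] at h0 ⊢
          omega
        · refine ⟨0, ?_, Or.inl rfl⟩
          simp only [hb, if_neg h1, if_neg h2] at h0 ⊢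
          omega
      obtain ⟨di, hbi, hdi⟩ := hbval i
      obtain ⟨dj, hbj, hdj⟩ := hbval j
      obtain ⟨dk, hbk, hdk⟩ := hbval k
      have hsum2 : ¬(di = 1 ∧ dj = 1 ∧ dk = 1) := by
        rintro ⟨e1, e2, e3⟩
        rcases hdi with h' | ⟨_, hi'⟩; · omega
        rcases hdj with h' | ⟨_, hj'⟩; · omega
        rcases hdk with h' | ⟨_, hk'⟩; · omega
        rcases hi' with rfl | rfl <;> rcases hj' with rfl | rfl <;>
          rcases hk' with rfl | rfl <;>
          first
            | exact absurd rfl hij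
            | exact absurd rfl hik
            | exact absurd rfl hjk
            | omega
      have hdi1 : di ≤ 1 := by omega
      have hdj1 : dj ≤ 1 := by omega
      have hdk1 : dk ≤ 1 := by omega
      have main : (b i % 2 = 1 ∧ b k % 2 = 1) ∨ (b i / 2 % 2 = 1 ∧ b j / 2 % 2 = 1) ∨
          (b j % 2 = 1 ∧ b k % 2 = 1) ∨ (b i % 2 = 1 ∧ b j % 2 = 1) := by omega
      rcases main with ⟨h1, h2⟩ | ⟨h1, h2⟩ | ⟨h1, h2⟩ | ⟨h1, h2⟩
      · exact even_multinomial_of_pair b i k hik (Or.inl ⟨h1, h2⟩)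
      · exact even_multinomial_of_pair b i j hij (Or.inr ⟨h1, h2⟩)
      · exact even_multinomial_of_pair b j k hjk (Or.inl ⟨h1, h2⟩)
      · exact even_multinomial_of_pair b i j hij (Or.inl ⟨h1, h2⟩)
    · exact Even.zero
end

section
/- Let (a_1, …, a_r) be an r-tuple of nonnegative integers with a_1 + ⋯ + a_r = n, and fix i with 1 ≤ i ≤ r−1. Let a' be the tuple obtained from a by interchanging a_i and a_{i+1}. Then, as an identity of integers, n·S(a') = n·S(a) + (a_i − a_{i+1})·C(n; a_1, …, a_r). -/
/-- The multinomial coefficient in which entry `k` is decreased by 1. -/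
def sub1 {r : ℕ} (a : Fin r → ℕ) (k : Fin r) : ℕ :=
  multinomialZ (fun i => (a i : ℤ) - if i = k then 1 else 0)

/-- `S(a) = ∑_{k=1}^{r-1} k ⬝ C(n-1; a_1, …, a_{k+1} - 1, …, a_r)`; here indices are
`0`-based so the `(k+1)`-st part is the entry at index `k`, and the `k = 0` term vanishes. -/
def S {r : ℕ} (a : Fin r → ℕ) : ℕ :=
  ∑ k : Fin r, (k : ℕ) * sub1 a k

lemma key {r n : ℕ} (a : Fin r → ℕ) (h : ∑ k, a k = n) (k : Fin r) :
    (n : ℤ) * sub1 a k = (a k : ℤ) * Nat.multinomial Finset.univ a := by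
  rcases Nat.eq_zero_or_pos (a k) with h0 | hpos
  · have hz : sub1 a k = 0 := by
      unfold sub1 multinomialZ
      rw [if_neg]
      push_neg
      exact ⟨k, by simp [h0]⟩
    simp [hz, h0]
  · set f' : Fin r → ℕ := fun i => a i - if i = k then 1 else 0 with hf'
    have hs : sub1 a k = Nat.multinomial Finset.univ f' := by
      unfold sub1 multinomialZ
      rw [if_pos]
      · congr 1; ext j
        by_cases hj : j = k <;> simp [hj, hf'] <;> omega
      · intro j
        by_cases hj : j = k <;> simp [hj] <;> omega
    have hind : (∑ j : Fin r, (if j = k then 1 else 0)) = 1 := by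
      simp
    have hsum : (∑ j, f' j) + 1 = n := by
      have : ∑ j, (f' j + if j = k then 1 else 0) = ∑ j, a j := by
        apply Finset.sum_congr rfl
        intro j _
        by_cases hj : j = k <;> simp [hj, hf'] <;> omega
      rw [Finset.sum_add_distrib, hind] at this
      omega
    have hP' : 0 < ∏ j : Fin r, Nat.factorial (f' j) :=
      Finset.prod_pos fun j _ => Nat.factorial_pos _
    have hP : (∏ j : Fin r, Nat.factorial (a j)) = a k * ∏ j : Fin r, Nat.factorial (f' j) := by
      rw [← Finset.mul_prod_erase Finset.univ _ (Finset.mem_univ k),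
          ← Finset.mul_prod_erase Finset.univ (fun j => Nat.factorial (f' j)) (Finset.mem_univ k), ← mul_assoc]
      congr 1
      · have hfk : f' k = a k - 1 := by simp [hf']
        obtain ⟨m, hm⟩ : ∃ m, a k = m + 1 := ⟨a k - 1, by omega⟩
        rw [hfk, hm]
        simp [Nat.factorial_succ]
      · apply Finset.prod_congr rfl
        intro j hj
        have : j ≠ k := (Finset.mem_erase.mp hj).1
        simp [hf', this]
    have hnat : n * Nat.multinomial Finset.univ f' = a k * Nat.multinomial Finset.univ a := by
      apply Nat.eq_of_mul_eq_mul_left hP'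
      have s1 := Nat.multinomial_spec Finset.univ f'
      have s2 := Nat.multinomial_spec Finset.univ a
      calc (∏ j : Fin r, Nat.factorial (f' j)) * (n * Nat.multinomial Finset.univ f')
          = n * ((∏ j : Fin r, Nat.factorial (f' j)) * Nat.multinomial Finset.univ f') := by ring
        _ = n * Nat.factorial (∑ j, f' j) := by rw [s1]
        _ = Nat.factorial n := by rw [← hsum, Nat.factorial_succ]
        _ = (∏ j : Fin r, Nat.factorial (a j)) * Nat.multinomial Finset.univ a := by rw [s2, h]
        _ = (∏ j : Fin r, Nat.factorial (f' j)) * (a k * Nat.multinomial Finset.univ a) := by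
            rw [hP]; ring
    rw [hs]
    exact_mod_cast congrArg (Nat.cast : ℕ → ℤ) hnat

lemma mult_comp {r : ℕ} (a : Fin r → ℕ) (e : Equiv.Perm (Fin r)) :
    Nat.multinomial Finset.univ (a ∘ e) = Nat.multinomial Finset.univ a := by
  have hP : 0 < ∏ j : Fin r, Nat.factorial ((a ∘ e) j) :=
    Finset.prod_pos fun j _ => Nat.factorial_pos _
  apply Nat.eq_of_mul_eq_mul_left hP
  have s1 := Nat.multinomial_spec Finset.univ (a ∘ e)
  have s2 := Nat.multinomial_spec Finset.univ a
  rw [s1]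
  have hsum : (∑ j, (a ∘ e) j) = ∑ j, a j := Equiv.sum_comp e a
  have hprod : (∏ j : Fin r, Nat.factorial ((a ∘ e) j)) = ∏ j : Fin r, Nat.factorial (a j) :=
    Equiv.prod_comp e (fun j => Nat.factorial (a j))
  rw [hsum, hprod, s2]

/-- If `a'` is obtained from `a` by interchanging the `i`-th and `(i+1)`-st
entries, then `n ⬝ S(a') = n ⬝ S(a) + (a_i - a_{i+1}) ⬝ C(n; a_1, …, a_r)` in `ℤ`. -/
theorem stmt8 {r n : ℕ} (a : Fin r → ℕ) (h : ∑ k, a k = n)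
    (i : ℕ) (hi : i + 1 < r) :
    (n : ℤ) * S (a ∘ Equiv.swap (⟨i, Nat.lt_of_succ_lt hi⟩ : Fin r) (⟨i + 1, hi⟩ : Fin r))
      = (n : ℤ) * S a +
        ((a ⟨i, Nat.lt_of_succ_lt hi⟩ : ℤ) - (a ⟨i + 1, hi⟩ : ℤ)) *
          Nat.multinomial Finset.univ a := by
  set i0 : Fin r := ⟨i, Nat.lt_of_succ_lt hi⟩
  set i1 : Fin r := ⟨i + 1, hi⟩
  have hne : i0 ≠ i1 := by simp [i0, i1, Fin.ext_iff]
  set σ := Equiv.swap i0 i1 with hσ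
  set b : Fin r → ℕ := a ∘ σ with hb
  have hsb : ∑ k, b k = n := by rw [← h]; exact Equiv.sum_comp σ a
  set M : ℤ := (Nat.multinomial Finset.univ a : ℤ) with hM
  have hMb : (Nat.multinomial Finset.univ b : ℤ) = M := by
    rw [hM, hb]; exact congrArg Nat.cast (mult_comp a σ)
  have expand : ∀ (c : Fin r → ℕ), (∑ k, c k = n) →
      (n : ℤ) * S c = ∑ k : Fin r, (k : ℤ) * ((c k : ℤ) * (Nat.multinomial Finset.univ c : ℤ)) := by
    intro c hc
    unfold S
    push_cast
    rw [Finset.mul_sum]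
    apply Finset.sum_congr rfl
    intro k _
    rw [← mul_assoc, mul_comm (n:ℤ) (k:ℤ), mul_assoc]
    rw [key c hc k]
  rw [expand b hsb, expand a h]
  simp only [hMb]
  have swapinv : ∀ k, σ (σ k) = k := fun k => Equiv.swap_apply_self _ _ k
  have reidx : (∑ k : Fin r, (k : ℤ) * ((b k : ℤ) * M))
      = ∑ j : Fin r, ((σ j : ℕ) : ℤ) * ((a j : ℤ) * M) := by
    have := Equiv.sum_comp σ (fun j => ((σ j : ℕ) : ℤ) * ((a j : ℤ) * M))
    rw [← this]
    apply Finset.sum_congr rfl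
    intro k _
    simp only [swapinv, hb, Function.comp]
  rw [reidx]
  rw [← sub_eq_iff_eq_add']
  rw [← Finset.sum_sub_distrib]
  have : ∀ j : Fin r, ((σ j : ℕ) : ℤ) * ((a j : ℤ) * M) - (j : ℤ) * ((a j : ℤ) * M)
      = (((σ j : ℕ) : ℤ) - (j : ℤ)) * ((a j : ℤ) * M) := by intro j; ring
  simp only [← hM, this]
  have hzero : ∀ j : Fin r, j ∉ ({i0, i1} : Finset (Fin r)) →
      (((σ j : ℕ) : ℤ) - (j : ℤ)) * ((a j : ℤ) * M) = 0 := by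
    intro j hj
    simp only [Finset.mem_insert, Finset.mem_singleton, not_or] at hj
    rw [hσ, Equiv.swap_apply_of_ne_of_ne hj.1 hj.2]
    ring
  rw [← Finset.sum_subset (Finset.subset_univ ({i0, i1} : Finset (Fin r)))
      (fun j _ hj => hzero j hj)]
  rw [Finset.sum_pair hne]
  rw [hσ, Equiv.swap_apply_left, Equiv.swap_apply_right]
  simp only [i0, i1]
  push_cast
  ring
end

section
/- Let r be an odd prime and let (a_1, …, a_r) be an r-tuple of nonnegative integers with a_1 + ⋯ + a_r = n. Suppose the r multinomial coefficients C(n−1; a_1, …, a_k − 1, …, a_r), for 1 ≤ k ≤ r, do not all lie in a single residue class modulo r. Then there exists a permutation π of {1, …, r} such that S(a_{π(1)}, …, a_{π(r)}) ≢ 0 (mod r). -/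
lemma multinomialZ_comp {r : ℕ} (π : Equiv.Perm (Fin r)) (b : Fin r → ℤ) :
    multinomialZ (b ∘ π) = multinomialZ b := by
  unfold multinomialZ
  have hiff : (∀ i, 0 ≤ (b ∘ π) i) ↔ (∀ i, 0 ≤ b i) :=
    ⟨fun h i => by simpa using h (π.symm i), fun h i => h _⟩
  by_cases hpos : ∀ i, 0 ≤ b i
  · rw [if_pos (hiff.2 hpos), if_pos hpos]
    unfold Nat.multinomial
    rw [show (∑ i, ((b ∘ π) i).toNat) = ∑ i, (b i).toNat from
        Equiv.sum_comp π (fun i => (b i).toNat),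
      show (∏ i, Nat.factorial ((b ∘ π) i).toNat) = ∏ i, Nat.factorial (b i).toNat from
        Equiv.prod_comp π (fun i => Nat.factorial (b i).toNat)]
  · rw [if_neg (fun h => hpos (hiff.1 h)), if_neg hpos]

lemma sub1_comp {r : ℕ} (a : Fin r → ℕ) (π : Equiv.Perm (Fin r)) (k : Fin r) :
    sub1 (a ∘ π) k = sub1 a (π k) := by
  unfold sub1
  rw [← multinomialZ_comp π (fun i => (a i : ℤ) - if i = π k then 1 else 0)]
  congr 1
  funext i
  simp [Function.comp, π.injective.eq_iff]

/-- Let `r` be an odd prime. If the multinomial coefficients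
`C(n-1; a_1, …, a_k - 1, …, a_r)`, `1 ≤ k ≤ r`, do not all lie in a single residue class
modulo `r`, then some permutation `π` of the entries satisfies `S(a ∘ π) ≢ 0 (mod r)`. -/
theorem stmt10 {r n : ℕ} (hr : Nat.Prime r) (hodd : Odd r)
    (a : Fin r → ℕ) (h : ∑ i, a i = n)
    (hres : ¬ ∀ k l : Fin r, sub1 a k ≡ sub1 a l [MOD r]) :
    ∃ π : Equiv.Perm (Fin r), ¬ (S (a ∘ π) ≡ 0 [MOD r]) := by
  by_contra hcon
  push_neg at hcon hres
  obtain ⟨k, l, hkl⟩ := hres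
  have hklne : k ≠ l := by rintro rfl; exact hkl (Nat.ModEq.refl _)
  haveI : Fact (Nat.Prime r) := ⟨hr⟩
  set c : Fin r → ZMod r := fun j => (sub1 a j : ZMod r) with hc
  have key : ∀ π : Equiv.Perm (Fin r),
      ∑ j : Fin r, (((π.symm j : Fin r) : ℕ) : ZMod r) * c j = 0 := by
    intro π
    have h1 : ((S (a ∘ π) : ℕ) : ZMod r) = ((0 : ℕ) : ZMod r) :=
      (ZMod.natCast_eq_natCast_iff _ _ _).2 (hcon π)
    have h2 : ∑ j : Fin r, ((j : ℕ) : ZMod r) * (sub1 a (π j) : ZMod r) = 0 := by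
      simpa [S, sub1_comp] using h1
    calc ∑ j : Fin r, (((π.symm j : Fin r) : ℕ) : ZMod r) * c j
        = ∑ j : Fin r, (((π.symm (π j) : Fin r) : ℕ) : ZMod r) * c (π j) :=
          (Equiv.sum_comp π (fun j => (((π.symm j : Fin r) : ℕ) : ZMod r) * c j)).symm
      _ = 0 := by simpa [hc] using h2
  have hA := key 1
  have hB := key (Equiv.swap k l)
  simp only [Equiv.Perm.one_symm, Equiv.Perm.coe_one, id_eq, Equiv.symm_swap] at hA hB
  have hsum : ∑ j : Fin r,
      (((j : ℕ) : ZMod r) - (((Equiv.swap k l j : Fin r) : ℕ) : ZMod r)) * c j = 0 := by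
    simp only [sub_mul, Finset.sum_sub_distrib, hA, hB, sub_zero]
  have hpair : ∑ j ∈ ({k, l} : Finset (Fin r)),
      (((j : ℕ) : ZMod r) - (((Equiv.swap k l j : Fin r) : ℕ) : ZMod r)) * c j = 0 := by
    rw [← hsum]
    apply Finset.sum_subset (Finset.subset_univ _)
    intro j _ hj
    simp only [Finset.mem_insert, Finset.mem_singleton, not_or] at hj
    rw [Equiv.swap_apply_of_ne_of_ne hj.1 hj.2, sub_self, zero_mul]
  rw [Finset.sum_pair hklne] at hpair
  rw [Equiv.swap_apply_left, Equiv.swap_apply_right] at hpair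
  have hfact : (((k : ℕ) : ZMod r) - ((l : ℕ) : ZMod r)) * (c k - c l) = 0 := by
    linear_combination hpair
  have hkl' : ((k : ℕ) : ZMod r) ≠ ((l : ℕ) : ZMod r) := by
    intro he
    have := (ZMod.natCast_eq_natCast_iff _ _ _).1 he
    exact hklne (Fin.ext (by
      have := this
      unfold Nat.ModEq at this
      rwa [Nat.mod_eq_of_lt k.isLt, Nat.mod_eq_of_lt l.isLt] at this))
  rcases mul_eq_zero.1 hfact with h1 | h2
  · exact hkl' (sub_eq_zero.1 h1)
  · exact hkl ((ZMod.natCast_eq_natCast_iff _ _ _).1 (sub_eq_zero.1 h2))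
end

section
/- Let r be an odd prime and let (a_1, …, a_r) be an r-tuple of nonnegative integers with a_1 + ⋯ + a_r = n. Suppose the r multinomial coefficients C(n−1; a_1, …, a_k − 1, …, a_r), for 1 ≤ k ≤ r, do not all lie in a single residue class modulo r. Then for every s with 1 ≤ s ≤ r−1 there exists a permutation π of {1, …, r} such that S(a_{π(1)}, …, a_{π(r)}) ≡ s (mod r). -/
/-- Key combinatorial lemma over `ZMod r`. -/
lemma key_s11 {r : ℕ} [Fact (Nat.Prime r)] (b : ZMod r → ZMod r)
    (hb : ∃ i j, b i ≠ b j) (s : ZMod r) (hs : s ≠ 0) :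
    ∃ σ : Equiv.Perm (ZMod r), ∑ x, x * b (σ x) = s := by
  have reindex : ∀ (e σ : Equiv.Perm (ZMod r)),
      (∑ x, x * b (σ (e x))) = ∑ y, e.symm y * b (σ y) := by
    intro e σ
    rw [← Equiv.sum_comp e (fun y => e.symm y * b (σ y))]
    simp
  by_cases hT0 : (∑ x, b x) = 0
  · -- find σ₀ with nonzero sum, then scale
    obtain ⟨i, j, hij⟩ := hb
    have hij' : i ≠ j := fun h => hij (by rw [h])
    have h1 : (∑ x, x * b (Equiv.swap i j x)) = ∑ y, Equiv.swap i j y * b y := by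
      have := reindex (Equiv.swap i j) (Equiv.refl (ZMod r))
      simpa using this
    have hswap : (∑ y, Equiv.swap i j y * b y) - (∑ y : ZMod r, y * b y)
        = (j - i) * (b i - b j) := by
      rw [← Finset.sum_sub_distrib]
      have hterm : ∀ y : ZMod r, Equiv.swap i j y * b y - y * b y
          = (if y = i then (j - i) * b i else 0) + (if y = j then (i - j) * b j else 0) := by
        intro y
        rcases eq_or_ne y i with rfl | hyi
        · simp [Equiv.swap_apply_left, hij', sub_mul]
        · rcases eq_or_ne y j with rfl | hyj
          · simp [Equiv.swap_apply_right, hyi, sub_mul]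
          · simp [Equiv.swap_apply_of_ne_of_ne hyi hyj, hyi, hyj]
      rw [Finset.sum_congr rfl fun y _ => hterm y, Finset.sum_add_distrib]
      simp only [Finset.sum_ite_eq', Finset.mem_univ, if_true]
      ring
    have hne : (j - i) * (b i - b j) ≠ 0 :=
      mul_ne_zero (sub_ne_zero.mpr (Ne.symm hij')) (sub_ne_zero.mpr hij)
    obtain ⟨σ₀, hσ₀⟩ : ∃ σ₀ : Equiv.Perm (ZMod r), (∑ x, x * b (σ₀ x)) ≠ 0 := by
      by_cases h2 : (∑ y : ZMod r, y * b y) = 0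
      · refine ⟨Equiv.swap i j, ?_⟩
        rw [h1]
        intro h0
        rw [h0, h2, sub_zero] at hswap
        exact hne hswap.symm
      · exact ⟨Equiv.refl (ZMod r), by simpa using h2⟩
    have hune : (∑ x, x * b (σ₀ x)) * s⁻¹ ≠ 0 := mul_ne_zero hσ₀ (inv_ne_zero hs)
    set u : ZMod r := (∑ x, x * b (σ₀ x)) * s⁻¹ with hu
    refine ⟨(Equiv.mulRight₀ u hune).trans σ₀, ?_⟩
    have step1 : (∑ x, x * b (((Equiv.mulRight₀ u hune).trans σ₀) x))
        = ∑ y, (y * u⁻¹) * b (σ₀ y) := by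
      have h := reindex (Equiv.mulRight₀ u hune) σ₀
      simp only [Equiv.trans_apply]
      rw [h]
      exact Finset.sum_congr rfl fun y _ => rfl
    have step2 : (∑ y, (y * u⁻¹) * b (σ₀ y)) = u⁻¹ * ∑ y, y * b (σ₀ y) := by
      rw [Finset.mul_sum]
      exact Finset.sum_congr rfl fun y _ => by ring
    rw [step1, step2, hu, mul_inv, inv_inv]
    field_simp
  · -- shift
    set T : ZMod r := ∑ x, b x with hT
    set v : ZMod r := ((∑ y : ZMod r, y * b y) - s) * T⁻¹ with hv
    refine ⟨(Equiv.addRight v).trans (Equiv.refl (ZMod r)), ?_⟩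
    have step1 : (∑ x, x * b (((Equiv.addRight v).trans (Equiv.refl (ZMod r))) x))
        = ∑ y, (y - v) * b y := by
      have := reindex (Equiv.addRight v) (Equiv.refl (ZMod r))
      simp only [Equiv.trans_apply, Equiv.refl_apply] at this ⊢
      rw [this]
      refine Finset.sum_congr rfl fun y _ => ?_
      have hsymm : (Equiv.addRight v).symm y = y - v := by
        simp [Equiv.addRight, sub_eq_add_neg]
      rw [hsymm]
    have expand : (∑ y, (y - v) * b y) = (∑ y : ZMod r, y * b y) - v * T := by
      rw [hT, Finset.mul_sum, ← Finset.sum_sub_distrib]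
      exact Finset.sum_congr rfl fun y _ => by ring
    rw [step1, expand, hv, mul_assoc, inv_mul_cancel₀ hT0, mul_one]
    ring

/-- Let `r` be an odd prime. If the multinomial coefficients
`C(n-1; a_1, …, a_k - 1, …, a_r)`, `1 ≤ k ≤ r`, do not all lie in a single residue class
modulo `r`, then for every `s` with `1 ≤ s ≤ r - 1` some permutation `π` of the entries
satisfies `S(a ∘ π) ≡ s (mod r)`. -/
theorem stmt11 {r n : ℕ} (hr : Nat.Prime r) (hodd : Odd r)
    (a : Fin r → ℕ) (h : ∑ i, a i = n)
    (hres : ¬ ∀ k l : Fin r, sub1 a k ≡ sub1 a l [MOD r]) :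
    ∀ s : ℕ, 1 ≤ s → s ≤ r - 1 →
      ∃ π : Equiv.Perm (Fin r), S (a ∘ π) ≡ s [MOD r] := by
  intro s hs1 hs2
  haveI : Fact (Nat.Prime r) := ⟨hr⟩
  haveI : NeZero r := ⟨hr.ne_zero⟩
  have hrpos : 2 ≤ r := hr.two_le
  -- equivalence Fin r ≃ ZMod r via natCast
  have hinj : Function.Injective (fun k : Fin r => ((k : ℕ) : ZMod r)) := by
    intro k l hkl
    simp only at hkl
    have hval : ((k : ℕ) : ZMod r).val = ((l : ℕ) : ZMod r).val := congrArg ZMod.val hkl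
    rw [ZMod.val_cast_of_lt k.isLt, ZMod.val_cast_of_lt l.isLt] at hval
    exact Fin.ext hval
  have hbij : Function.Bijective (fun k : Fin r => ((k : ℕ) : ZMod r)) := by
    rw [Fintype.bijective_iff_injective_and_card]
    exact ⟨hinj, by simp [ZMod.card]⟩
  set E : Fin r ≃ ZMod r := Equiv.ofBijective _ hbij with hE
  have hEapp : ∀ k : Fin r, E k = ((k : ℕ) : ZMod r) := fun k => rfl
  set c : Fin r → ZMod r := fun k => ((sub1 a k : ℕ) : ZMod r) with hc
  push_neg at hres
  obtain ⟨k₀, l₀, hkl⟩ := hres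
  have hb : ∃ i j : ZMod r, (c ∘ E.symm) i ≠ (c ∘ E.symm) j := by
    refine ⟨E k₀, E l₀, ?_⟩
    simp only [Function.comp, Equiv.symm_apply_apply]
    intro hcc
    exact hkl ((ZMod.natCast_eq_natCast_iff _ _ _).mp hcc)
  have hsne : ((s : ℕ) : ZMod r) ≠ 0 := by
    intro h0
    rw [ZMod.natCast_eq_zero_iff] at h0
    have := Nat.le_of_dvd hs1 h0
    omega
  obtain ⟨σ, hσ⟩ := key_s11 (c ∘ E.symm) hb (s : ZMod r) hsne
  refine ⟨(E.trans σ).trans E.symm, ?_⟩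
  rw [← ZMod.natCast_eq_natCast_iff]
  have hcast : ((S (a ∘ ((E.trans σ).trans E.symm)) : ℕ) : ZMod r)
      = ∑ k : Fin r, E k * c (((E.trans σ).trans E.symm) k) := by
    unfold S
    push_cast
    refine Finset.sum_congr rfl fun k _ => ?_
    rw [sub1_comp, hEapp, hc]
  rw [hcast, ← hσ]
  rw [← Equiv.sum_comp E (fun x => x * (c ∘ E.symm) (σ x))]
  refine Finset.sum_congr rfl fun k _ => ?_
  simp [Function.comp]
end

section
/- Let n ≥ 2 and let (a_1, …, a_r) be an r-tuple of nonnegative integers with a_1 + ⋯ + a_r = n. Fix a block function β from an n-element set X to {1, …, r} such that |β^{-1}(i)| = a_i for each i, and let H be the subgroup of the symmetric group on X consisting of all permutations σ with β∘σ = β (the Young subgroup S_{a_1} × ⋯ × S_{a_r}). For i ∈ {1, …, r}, let φ_i : H → {±1} be the homomorphism sending σ to the sign of the permutation induced by σ on the block β^{-1}(i). Then for every transposition τ of X, the transfer homomorphism of φ_i, a homomorphism from the symmetric group on X to {±1}, sends τ to (−1)^{C(n−2; a_1, …, a_i − 2, …, a_r)}. -/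
/-- The Young subgroup of `Equiv.Perm X` determined by the block function `β`:
all permutations preserving every block (fiber) of `β`. -/
def blockSubgroup {X : Type*} {r : ℕ} (β : X → Fin r) : Subgroup (Equiv.Perm X) where
  carrier := {σ | ∀ x, β (σ x) = β x}
  one_mem' := fun _ => rfl
  mul_mem' := by
    intro σ τ hσ hτ x
    have h1 : β (τ x) = β x := hτ x
    have h2 : β (σ (τ x)) = β (τ x) := hσ (τ x)
    simpa [Equiv.Perm.mul_apply, h1] using h2
  inv_mem' := by
    intro σ hσ x
    have := hσ (σ⁻¹ x)
    simpa using this.symm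

/-- The homomorphism sending `σ` in the Young subgroup to the permutation it induces on
the block `β⁻¹(i)`. -/
def restrictHom {X : Type*} {r : ℕ} (β : X → Fin r) (i : Fin r) :
    blockSubgroup β →* Equiv.Perm {x : X // β x = i} where
  toFun σ := Equiv.Perm.subtypePerm σ.1 (fun x => by
    constructor
    · intro hx; rwa [σ.2 x] at hx
    · intro hx; rw [σ.2 x]; exact hx)
  map_one' := rfl
  map_mul' := fun _ _ => rfl

/-- `φ_i` : the sign of the permutation induced on the block `β⁻¹(i)`, valued in `ℤˣ = {±1}`. -/
noncomputable def blockSign {X : Type*} [Fintype X] [DecidableEq X] {r : ℕ}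
    (β : X → Fin r) (i : Fin r) : blockSubgroup β →* ℤˣ :=
  Equiv.Perm.sign.comp (restrictHom β i)

section Stmt14Aux

open Finset

variable {X : Type*} [Fintype X] [DecidableEq X] {r : ℕ}

/-- L2 -/
lemma filter_comp_perm (f : X → Fin r) (g : Equiv.Perm X) (j : Fin r) :
    (univ.filter fun z => f (g z) = j).card = (univ.filter fun z => f z = j).card := by
  apply Finset.card_bij (fun z _ => g z)
  · intro z hz; simp only [mem_filter, mem_univ, true_and] at hz ⊢; exact hz
  · intro z _ w _ h; exact g.injective h
  · intro w hw
    refine ⟨g⁻¹ w, ?_, by simp⟩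
    simp only [mem_filter, mem_univ, true_and] at hw ⊢
    simpa using hw

def fiberFst {γ : Fin r → Type*} (j : Fin r) : {s : Σ j', γ j' // s.1 = j} ≃ γ j where
  toFun s := s.2 ▸ s.1.2
  invFun v := ⟨⟨j, v⟩, rfl⟩
  left_inv s := by rcases s with ⟨⟨j', v⟩, h⟩; subst h; rfl
  right_inv v := rfl

/-- existence of a block function with prescribed fiber sizes -/
lemma exists_beta (b : Fin r → ℕ) (hsum : ∑ j, b j = Fintype.card X) :
    ∃ β : X → Fin r, ∀ j, (univ.filter fun z => β z = j).card = b j := by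
  have hcard : Fintype.card X = Fintype.card (Σ j, Fin (b j)) := by
    simp [Fintype.card_sigma, hsum]
  obtain e := Fintype.equivOfCardEq hcard
  refine ⟨fun z => (e z).1, fun j => ?_⟩
  rw [← Fintype.card_subtype]
  have e1 : {z : X // (e z).1 = j} ≃ {s : Σ j', Fin (b j') // s.1 = j} :=
    e.subtypeEquiv fun z => Iff.rfl
  rw [Fintype.card_congr (e1.trans (fiberFst j)), Fintype.card_fin]

/-- realize a coloring with the same fiber sizes as β by a permutation -/
lemma exists_perm_real {β f : X → Fin r}
    (h : ∀ j, (univ.filter fun z => f z = j).card = (univ.filter fun z => β z = j).card) :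
    ∃ g : Equiv.Perm X, ∀ z, β (g z) = f z := by
  have e : ∀ j, {z // f z = j} ≃ {z // β z = j} := fun j =>
    Fintype.equivOfCardEq (by rw [Fintype.card_subtype, Fintype.card_subtype, h j])
  exact ⟨Equiv.ofFiberEquiv e, fun z => Equiv.ofFiberEquiv_map e z⟩

/-- glue a family of block permutations into a permutation of X -/
def glue (β : X → Fin r) (σs : ∀ j, Equiv.Perm {z : X // β z = j}) : Equiv.Perm X where
  toFun z := (σs (β z) ⟨z, rfl⟩).1
  invFun z := ((σs (β z)).symm ⟨z, rfl⟩).1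
  left_inv z := by
    have key : ∀ (j : Fin r) (u : {v : X // β v = j}),
        ((σs (β u.1)).symm ⟨u.1, rfl⟩).1 = ((σs j).symm u).1 := by
      rintro j ⟨u, rfl⟩; rfl
    have hw : β ((σs (β z) ⟨z, rfl⟩).1) = β z := (σs (β z) ⟨z, rfl⟩).2
    calc ((σs (β ((σs (β z) ⟨z, rfl⟩).1))).symm ⟨(σs (β z) ⟨z, rfl⟩).1, rfl⟩).1
        = ((σs (β z)).symm ⟨(σs (β z) ⟨z, rfl⟩).1, hw⟩).1 := key (β z) ⟨_, hw⟩
      _ = z := by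
          rw [show (⟨(σs (β z) ⟨z, rfl⟩).1, hw⟩ : {v : X // β v = β z}) = σs (β z) ⟨z, rfl⟩ from
            Subtype.ext rfl, Equiv.symm_apply_apply]
  right_inv z := by
    have key : ∀ (j : Fin r) (u : {v : X // β v = j}),
        (σs (β u.1) ⟨u.1, rfl⟩).1 = ((σs j) u).1 := by
      rintro j ⟨u, rfl⟩; rfl
    have hw : β (((σs (β z)).symm ⟨z, rfl⟩).1) = β z := ((σs (β z)).symm ⟨z, rfl⟩).2
    calc (σs (β (((σs (β z)).symm ⟨z, rfl⟩).1)) ⟨((σs (β z)).symm ⟨z, rfl⟩).1, rfl⟩).1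
        = (σs (β z) ⟨((σs (β z)).symm ⟨z, rfl⟩).1, hw⟩).1 := key (β z) ⟨_, hw⟩
      _ = z := by
          rw [show (⟨((σs (β z)).symm ⟨z, rfl⟩).1, hw⟩ : {v : X // β v = β z})
              = (σs (β z)).symm ⟨z, rfl⟩ from Subtype.ext rfl, Equiv.apply_symm_apply]

def piEquiv (β : X → Fin r) : blockSubgroup β ≃ ∀ j, Equiv.Perm {z : X // β z = j} where
  toFun σ j := Equiv.Perm.subtypePerm σ.1 (fun z => by
    constructor
    · intro hz; rwa [σ.2 z] at hz
    · intro hz; rw [σ.2 z]; exact hz)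
  invFun σs := ⟨glue β σs, fun z => (σs (β z) ⟨z, rfl⟩).2⟩
  left_inv σ := by
    apply Subtype.ext; apply Equiv.ext; intro z; rfl
  right_inv σs := by
    funext j; apply Equiv.ext; rintro ⟨u, rfl⟩
    apply Subtype.ext; rfl

lemma card_blockSubgroup (β : X → Fin r) (a : Fin r → ℕ)
    (hβ : ∀ j, (univ.filter fun z => β z = j).card = a j) :
    Nat.card (blockSubgroup β) = ∏ j, (a j).factorial := by
  rw [Nat.card_congr (piEquiv β), Nat.card_pi]
  refine Finset.prod_congr rfl fun j _ => ?_
  rw [Nat.card_eq_fintype_card, Fintype.card_perm, Fintype.card_subtype, hβ j]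

lemma cardColorings (b : Fin r → ℕ) (hsum : ∑ j, b j = Fintype.card X) :
    Fintype.card {f : X → Fin r // ∀ j, (univ.filter fun z => f z = j).card = b j}
      = Nat.multinomial univ b := by
  obtain ⟨β0, hβ0⟩ := exists_beta b hsum
  set C := {f : X → Fin r // ∀ j, (univ.filter fun z => f z = j).card = b j} with hC
  let Φ : Equiv.Perm X → C := fun g =>
    ⟨fun z => β0 (g⁻¹ z), fun j => (filter_comp_perm β0 g⁻¹ j).trans (hβ0 j)⟩
  have fibEq : ∀ c : C, Nat.card {g // Φ g = c} = Nat.card (blockSubgroup β0) := by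
    intro c
    obtain ⟨g1, hg1⟩ := exists_perm_real (β := β0) (f := c.1)
      (fun j => (c.2 j).trans (hβ0 j).symm)
    have hΦg0 : Φ g1⁻¹ = c := Subtype.ext (funext fun z => by simpa [Φ] using hg1 z)
    refine Nat.card_congr ⟨fun p => ⟨g1 * p.1, ?_⟩, fun h => ⟨g1⁻¹ * h.1, ?_⟩, ?_, ?_⟩
    · -- g1 * p.1 ∈ blockSubgroup β0
      have hf : ∀ z, β0 (p.1⁻¹ z) = β0 (g1 z) := by
        intro z
        have := congrArg Subtype.val (p.2.trans hΦg0.symm)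
        have := congrFun this z
        simpa [Φ] using this
      intro z
      show β0 ((g1 * p.1) z) = β0 z
      have := hf (p.1 z)
      simp only [Equiv.Perm.inv_def, Equiv.symm_apply_apply] at this
      simpa using this.symm
    · -- Φ (g1⁻¹ * h.1) = c
      apply Subtype.ext; funext z
      show β0 ((g1⁻¹ * h.1)⁻¹ z) = c.1 z
      have hmem := (blockSubgroup β0).inv_mem h.2
      have : β0 (h.1⁻¹ (g1 z)) = β0 (g1 z) := hmem (g1 z)
      simpa [mul_inv_rev, hg1 z] using this.trans (hg1 z)
    · rintro ⟨g, hg⟩; apply Subtype.ext; simp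
    · rintro ⟨h, hh⟩; apply Subtype.ext; simp
  have key : Fintype.card (Equiv.Perm X) = Fintype.card C * Nat.card (blockSubgroup β0) := by
    rw [← Fintype.card_congr (Equiv.sigmaFiberEquiv Φ), Fintype.card_sigma]
    rw [Finset.sum_congr rfl (fun c _ => (Nat.card_eq_fintype_card).symm.trans (fibEq c))]
    rw [Finset.sum_const, smul_eq_mul, Finset.card_univ]
  rw [Fintype.card_perm, ← hsum, ← Nat.multinomial_spec univ b,
    card_blockSubgroup β0 b hβ0, mul_comm (∏ j, (b j).factorial)] at key
  exact Nat.eq_of_mul_eq_mul_right (Finset.prod_pos fun j _ => Nat.factorial_pos _) key.symm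

lemma subtype_filter_card {x y : X} (P : X → Prop) [DecidablePred P] :
    (univ.filter fun z : {z : X // z ≠ x ∧ z ≠ y} => P z.1).card
      = (univ.filter fun z : X => (z ≠ x ∧ z ≠ y) ∧ P z).card := by
  apply Finset.card_bij (fun z _ => z.1)
  · intro z hz; simp only [mem_filter, mem_univ, true_and] at hz ⊢; exact ⟨z.2, hz⟩
  · intro z _ w _ h; exact Subtype.ext h
  · intro w hw
    simp only [mem_filter, mem_univ, true_and] at hw
    exact ⟨⟨w, hw.1⟩, by simp [hw.2], rfl⟩

lemma filter_restrict_card {x y : X} (hxy : x ≠ y) {i : Fin r} {f : X → Fin r}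
    (hx : f x = i) (hy : f y = i) (j : Fin r) :
    (univ.filter fun z : X => f z = j).card
      = (univ.filter fun z : {z : X // z ≠ x ∧ z ≠ y} => f z.1 = j).card
        + (if j = i then 2 else 0) := by
  rw [subtype_filter_card (x := x) (y := y) (P := fun w => f w = j)]
  rcases eq_or_ne j i with rfl | hj
  · rw [if_pos rfl]
    have hset : univ.filter (fun z : X => (z ≠ x ∧ z ≠ y) ∧ f z = j)
        = (univ.filter fun z : X => f z = j) \ {x, y} := by
      ext z
      simp only [mem_filter, mem_univ, true_and, mem_sdiff, mem_insert, mem_singleton]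
      tauto
    have hsub : ({x, y} : Finset X) ⊆ univ.filter fun z : X => f z = j := by
      intro z hz
      simp only [mem_insert, mem_singleton] at hz
      rcases hz with rfl | rfl <;> simp [hx, hy]
    have hcard2 : ({x, y} : Finset X).card = 2 := by
      rw [card_insert_of_notMem (by simpa using hxy), card_singleton]
    have hge : 2 ≤ (univ.filter fun z : X => f z = j).card := by
      calc 2 = ({x, y} : Finset X).card := hcard2.symm
        _ ≤ _ := card_le_card hsub
    rw [hset, card_sdiff_of_subset hsub, hcard2]
    omega
  · rw [if_neg hj, add_zero]
    congr 1
    apply filter_congr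
    intro z _
    constructor
    · intro hz
      refine ⟨⟨?_, ?_⟩, hz⟩
      · rintro rfl; exact hj (by rw [← hz, hx])
      · rintro rfl; exact hj (by rw [← hz, hy])
    · exact fun h => h.2

lemma card_constrained (a : Fin r → ℕ) {x y : X} (hxy : x ≠ y) (i : Fin r) (h2 : 2 ≤ a i)
    (hsumX : ∑ j, a j = Fintype.card X) :
    Fintype.card {f : X → Fin r //
        (∀ j, (univ.filter fun z => f z = j).card = a j) ∧ f x = i ∧ f y = i}
      = Nat.multinomial univ (fun j => a j - if j = i then 2 else 0) := by
  set a' : Fin r → ℕ := fun j => a j - if j = i then 2 else 0 with ha'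
  have hsum' : ∑ j, a' j = Fintype.card {z : X // z ≠ x ∧ z ≠ y} := by
    have h1 : ∑ j, a' j = (∑ j, a j) - 2 := by
      rw [← Finset.sum_compl_add_sum {i} a', ← Finset.sum_compl_add_sum {i} a]
      have : ∑ j ∈ {i}ᶜ, a' j = ∑ j ∈ {i}ᶜ, a j := by
        apply Finset.sum_congr rfl
        intro j hj
        simp only [mem_compl, mem_singleton] at hj
        simp [ha', hj]
      rw [this, Finset.sum_singleton, Finset.sum_singleton]
      have ha'i : a' i = a i - 2 := by simp [ha']
      rw [ha'i]
      omega
    have h2' : Fintype.card {z : X // z ≠ x ∧ z ≠ y} = Fintype.card X - 2 := by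
      rw [Fintype.card_subtype]
      have hset : univ.filter (fun z : X => z ≠ x ∧ z ≠ y) = univ \ {x, y} := by
        ext z; simp [not_or]
      rw [hset, card_sdiff_of_subset (subset_univ _), card_univ,
        card_insert_of_notMem (by simpa using hxy), card_singleton]
    rw [h1, h2', hsumX]
  rw [← cardColorings a' hsum']
  apply Fintype.card_of_bijective (f := fun f =>
    ⟨fun z => f.1 z.1, fun j => by
      have := filter_restrict_card hxy f.2.2.1 f.2.2.2 j
      rw [f.2.1 j] at this
      simp only [ha']
      omega⟩)
  constructor
  · rintro ⟨f, hf⟩ ⟨g, hg⟩ h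
    have h' := congrArg Subtype.val h
    simp only at h'
    apply Subtype.ext
    funext z
    show f z = g z
    rcases eq_or_ne z x with rfl | hzx
    · rw [hf.2.1, hg.2.1]
    rcases eq_or_ne z y with rfl | hzy
    · rw [hf.2.2, hg.2.2]
    · exact congrFun h' ⟨z, hzx, hzy⟩
  · rintro ⟨f', hf'⟩
    set F : X → Fin r := fun z => if hz : z = x ∨ z = y then i
      else f' ⟨z, (not_or.mp hz).1, (not_or.mp hz).2⟩ with hF
    have hFx : F x = i := by simp [hF]
    have hFy : F y = i := by simp [hF]
    have hFz : ∀ z : {z : X // z ≠ x ∧ z ≠ y}, F z.1 = f' z := by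
      rintro ⟨z, hz1, hz2⟩
      simp [hF, hz1, hz2]
    refine ⟨⟨F, fun j => ?_, hFx, hFy⟩, ?_⟩
    · have := filter_restrict_card hxy hFx hFy j
      have heq : (univ.filter fun z : {z : X // z ≠ x ∧ z ≠ y} => F z.1 = j)
          = univ.filter fun z => f' z = j := by
        apply filter_congr; intro z _; rw [hFz z]
      rw [heq, hf' j] at this
      simp only [ha'] at this
      split_ifs at this with hji
      · subst hji; omega
      · omega
    · apply Subtype.ext
      funext z
      exact hFz z

lemma swap_mem_block' {β : X → Fin r} {u v : X} (huv : β u = β v) :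
    Equiv.swap u v ∈ blockSubgroup β := by
  intro z
  rcases eq_or_ne z u with rfl | hu
  · rw [Equiv.swap_apply_left, huv]
  rcases eq_or_ne z v with rfl | hv
  · rw [Equiv.swap_apply_right, huv]
  · rw [Equiv.swap_apply_of_ne_of_ne hu hv]

lemma blockSign_swap {β : X → Fin r} {i : Fin r} {u v : X} (huv : u ≠ v)
    (hβuv : β u = β v) (h : blockSubgroup β)
    (hh : (h : Equiv.Perm X) = Equiv.swap u v) :
    blockSign β i h = if β u = i then -1 else 1 := by
  by_cases hui : β u = i
  · have hvi : β v = i := hβuv ▸ hui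
    have hres : restrictHom β i h = Equiv.swap ⟨u, hui⟩ ⟨v, hvi⟩ := by
      apply Equiv.ext
      rintro ⟨z, hz⟩
      apply Subtype.ext
      show (h : Equiv.Perm X) z = _
      rw [hh]
      rcases eq_or_ne z u with rfl | hzu
      · rw [Equiv.swap_apply_left]
        exact (congrArg Subtype.val (Equiv.swap_apply_left
          (⟨z, hui⟩ : {w : X // β w = i}) ⟨v, hvi⟩)).symm
      rcases eq_or_ne z v with rfl | hzv
      · rw [Equiv.swap_apply_right]
        exact (congrArg Subtype.val (Equiv.swap_apply_right
          (⟨u, hui⟩ : {w : X // β w = i}) ⟨z, hvi⟩)).symm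
      · rw [Equiv.swap_apply_of_ne_of_ne hzu hzv,
          Equiv.swap_apply_of_ne_of_ne (fun hc => hzu (congrArg Subtype.val hc))
            (fun hc => hzv (congrArg Subtype.val hc))]
    rw [if_pos hui]
    show Equiv.Perm.sign (restrictHom β i h) = -1
    rw [hres, Equiv.Perm.sign_swap (fun hc => huv (congrArg Subtype.val hc))]
  · have hvi : β v ≠ i := fun hc => hui (hβuv.symm ▸ hc)
    have hres : restrictHom β i h = 1 := by
      apply Equiv.ext
      rintro ⟨z, hz⟩
      apply Subtype.ext
      show (h : Equiv.Perm X) z = z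
      rw [hh]
      exact Equiv.swap_apply_of_ne_of_ne (fun hc => hui (hc ▸ hz))
        (fun hc => hvi (hc ▸ hz))
    rw [if_neg hui]
    show Equiv.Perm.sign (restrictHom β i h) = 1
    rw [hres, map_one]

lemma fixed_iff (β : X → Fin r) (τ : Equiv.Perm X) (hτinv : τ⁻¹ = τ)
    (p : Equiv.Perm X ⧸ blockSubgroup β) :
    τ • p = p ↔ p.out⁻¹ * τ * p.out ∈ blockSubgroup β := by
  conv_lhs => rw [← QuotientGroup.out_eq' p]
  rw [MulAction.Quotient.smul_mk, QuotientGroup.eq, smul_eq_mul, mul_inv_rev, hτinv]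

lemma count_constrained_sub2 (a : Fin r → ℕ) {x y : X} (hxy : x ≠ y) (i : Fin r)
    (hsumX : ∑ j, a j = Fintype.card X) :
    Fintype.card {f : X → Fin r //
        (∀ j, (univ.filter fun z => f z = j).card = a j) ∧ f x = i ∧ f y = i}
      = sub2 a i := by
  by_cases h2 : 2 ≤ a i
  · rw [card_constrained a hxy i h2 hsumX]
    rw [sub2, multinomialZ, if_pos]
    · congr 1
      funext j
      split_ifs <;> omega
    · intro j
      split_ifs with h
      · subst h; omega
      · omega
  · have hs0 : sub2 a i = 0 := by
      rw [sub2, multinomialZ, if_neg]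
      intro hall
      have hi := hall i
      rw [if_pos rfl] at hi
      omega
    rw [hs0, Fintype.card_eq_zero_iff]
    constructor
    rintro ⟨f, hsz, hfx, hfy⟩
    have hsub : ({x, y} : Finset X) ⊆ univ.filter fun z => f z = i := by
      intro z hz
      simp only [mem_insert, mem_singleton] at hz
      rcases hz with rfl | rfl <;> simp [hfx, hfy]
    have hle := Finset.card_le_card hsub
    rw [hsz i, card_insert_of_notMem (by simpa using hxy), card_singleton] at hle
    omega

end Stmt14Aux

section Stmt14Main

open Finset

/-- With `|β⁻¹(i)| = a_i` for each `i` and `a_1 + ⋯ + a_r = n ≥ 2`, the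
transfer of `φ_i : S_{a_1} × ⋯ × S_{a_r} → {±1}` sends every transposition of `X` to
`(-1) ^ C(n-2; a_1, …, a_i - 2, …, a_r)`. -/
theorem stmt14 {r n : ℕ} (hn : 2 ≤ n) (a : Fin r → ℕ) (hsum : ∑ i, a i = n)
    {X : Type*} [Fintype X] [DecidableEq X] (hX : Fintype.card X = n)
    (β : X → Fin r) (hβ : ∀ i, (Finset.univ.filter (fun x => β x = i)).card = a i)
    (i : Fin r) (x y : X) (hxy : x ≠ y) :
    MonoidHom.transfer (blockSign β i) (Equiv.swap x y)
      = (-1 : ℤˣ) ^ sub2 a i := by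
  classical
  set τ : Equiv.Perm X := Equiv.swap x y with hτdef
  have hτinv : τ⁻¹ = τ := Equiv.swap_inv x y
  have hτ2 : τ * τ = 1 := Equiv.swap_mul_self x y
  set H : Subgroup (Equiv.Perm X) := blockSubgroup β with hHdef
  letI : Fintype (Quotient (MulAction.orbitRel (Subgroup.zpowers τ)
      (Equiv.Perm X ⧸ H))) := Fintype.ofFinite _
  set Pcond : (Equiv.Perm X ⧸ H) → Prop :=
    fun p => β (p.out⁻¹ x) = i ∧ β (p.out⁻¹ y) = i with hPcond
  have hconj : ∀ p : Equiv.Perm X ⧸ H,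
      p.out⁻¹ * τ * p.out = Equiv.swap (p.out⁻¹ x) (p.out⁻¹ y) := by
    intro p
    have := Equiv.swap_apply_apply p.out⁻¹ x y
    rw [this, inv_inv]
  rw [MonoidHom.transfer_eq_prod_quotient_orbitRel_zpowers_quot]
  have step1 : ∀ q : Quotient (MulAction.orbitRel (Subgroup.zpowers τ)
      (Equiv.Perm X ⧸ H)),
      blockSign β i
          ⟨q.out.out⁻¹ * τ ^ Function.minimalPeriod (τ • ·) q.out * q.out.out,
            QuotientGroup.out_conj_pow_minimalPeriod_mem H τ q.out⟩
        = if Pcond q.out then (-1 : ℤˣ) else 1 := by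
    intro q
    set p := q.out with hp
    set m := Function.minimalPeriod (τ • ·) p with hm
    have hper : Function.IsPeriodicPt (τ • ·) 2 p := by
      show (τ • ·)^[2] p = p
      rw [Function.iterate_succ, Function.iterate_one]
      show τ • τ • p = p
      rw [← mul_smul, hτ2, one_smul]
    have hdvd : m ∣ 2 := hper.minimalPeriod_dvd
    have hcases : m = 1 ∨ m = 2 := (Nat.dvd_prime Nat.prime_two).mp hdvd
    rcases hcases with hm1 | hm2
    · -- fixed coset
      have hfixed : τ • p = p := Function.minimalPeriod_eq_one_iff_isFixedPt.mp hm1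
      have hmem : p.out⁻¹ * τ * p.out ∈ H := (fixed_iff β τ hτinv p).mp hfixed
      have hmemswap : Equiv.swap (p.out⁻¹ x) (p.out⁻¹ y) ∈ H := by
        rw [← hconj p]; exact hmem
      have hβuv : β (p.out⁻¹ x) = β (p.out⁻¹ y) := by
        have := hmemswap (p.out⁻¹ x)
        rw [Equiv.swap_apply_left] at this
        exact this.symm
      have huv : p.out⁻¹ x ≠ p.out⁻¹ y := fun hc => hxy (p.out⁻¹.injective hc)
      have hval : (q.out.out⁻¹ * τ ^ m * q.out.out : Equiv.Perm X)
          = Equiv.swap (p.out⁻¹ x) (p.out⁻¹ y) := by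
        rw [hm1, pow_one, ← hp, hconj p]
      rw [blockSign_swap huv hβuv _ hval]
      rcases eq_or_ne (β (p.out⁻¹ x)) i with hui | hui
      · rw [if_pos hui, if_pos ⟨hui, hβuv ▸ hui⟩]
      · rw [if_neg hui, if_neg (fun hc => hui hc.1)]
    · -- 2-element orbit
      have hnot : ¬ Pcond p := by
        rintro ⟨h1, h2⟩
        have hmem : p.out⁻¹ * τ * p.out ∈ H := by
          rw [hconj p]
          exact swap_mem_block' (h1.trans h2.symm)
        have hfixed : τ • p = p := (fixed_iff β τ hτinv p).mpr hmem
        have : m = 1 := Function.minimalPeriod_eq_one_iff_isFixedPt.mpr hfixed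
        omega
      rw [if_neg hnot]
      have hval : (q.out.out⁻¹ * τ ^ m * q.out.out : Equiv.Perm X) = 1 := by
        rw [hm2, pow_two, hτ2, mul_one, inv_mul_cancel]
      have : (⟨q.out.out⁻¹ * τ ^ m * q.out.out,
          QuotientGroup.out_conj_pow_minimalPeriod_mem H τ q.out⟩ : H) = 1 :=
        Subtype.ext hval
      rw [this, map_one]
  rw [Finset.prod_congr rfl (fun q _ => step1 q), Finset.prod_ite,
    Finset.prod_const, Finset.prod_const, one_pow, mul_one]
  congr 1
  -- Pcond implies fixed
  have hfix_of_P : ∀ p : Equiv.Perm X ⧸ H, Pcond p → τ • p = p := by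
    rintro p ⟨h1, h2⟩
    exact (fixed_iff β τ hτinv p).mpr
      (by rw [hconj p]; exact swap_mem_block' (h1.trans h2.symm))
  have hout_of_P : ∀ p : Equiv.Perm X ⧸ H, Pcond p →
      (Quotient.mk (MulAction.orbitRel (Subgroup.zpowers τ) (Equiv.Perm X ⧸ H)) p).out
        = p := by
    intro p hp
    have hfix := hfix_of_P p hp
    have hrel := Quotient.mk_out
      (s := MulAction.orbitRel (Subgroup.zpowers τ) (Equiv.Perm X ⧸ H)) p
    rw [MulAction.orbitRel_apply] at hrel
    obtain ⟨g, hg⟩ := MulAction.mem_orbit_iff.mp hrel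
    obtain ⟨k, hk⟩ := Subgroup.mem_zpowers_iff.mp g.2
    have hstab : τ ∈ MulAction.stabilizer (Equiv.Perm X) p := hfix
    have hstabk : τ ^ k ∈ MulAction.stabilizer (Equiv.Perm X) p := zpow_mem hstab k
    have hgp : g • p = p := by
      show (g : Equiv.Perm X) • p = p
      rw [← hk]
      exact hstabk
    rw [← hg, hgp]
  have hcount1 : (univ.filter fun q : Quotient (MulAction.orbitRel
      (Subgroup.zpowers τ) (Equiv.Perm X ⧸ H)) => Pcond q.out).card
      = (univ.filter fun p : Equiv.Perm X ⧸ H => Pcond p).card := by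
    apply Finset.card_bij (fun q _ => q.out)
    · intro q hq
      simp only [mem_filter, mem_univ, true_and] at hq ⊢
      exact hq
    · intro q _ q' _ h
      exact Quotient.out_injective h
    · intro p hp
      simp only [mem_filter, mem_univ, true_and] at hp
      refine ⟨Quotient.mk _ p, ?_, hout_of_P p hp⟩
      simp only [mem_filter, mem_univ, true_and]
      rw [hout_of_P p hp]
      exact hp
  have hcount2 : (univ.filter fun p : Equiv.Perm X ⧸ H => Pcond p).card
      = Fintype.card {f : X → Fin r //
          (∀ j, (univ.filter fun z => f z = j).card = a j) ∧ f x = i ∧ f y = i} := by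
    rw [← Fintype.card_subtype]
    apply Fintype.card_of_bijective (f := fun p =>
      ⟨fun z => β (p.1.out⁻¹ z),
        ⟨fun j => (filter_comp_perm β p.1.out⁻¹ j).trans (hβ j), p.2.1, p.2.2⟩⟩)
    constructor
    · rintro ⟨p, hp⟩ ⟨p', hp'⟩ h
      have h' := congrFun (congrArg Subtype.val h)
      simp only at h'
      apply Subtype.ext
      show p = p'
      rw [← QuotientGroup.out_eq' p, ← QuotientGroup.out_eq' p', QuotientGroup.eq]
      intro z
      show β ((p.out⁻¹ * p'.out) z) = β z
      have h2 := h' (p'.out z)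
      simp only [Equiv.Perm.inv_def, Equiv.symm_apply_apply] at h2
      simpa using h2
    · rintro ⟨f, hsz, hfx, hfy⟩
      obtain ⟨g, hg⟩ := exists_perm_real (β := β) (f := f)
        (fun j => (hsz j).trans (hβ j).symm)
      set p : Equiv.Perm X ⧸ H := QuotientGroup.mk g⁻¹ with hpdef
      have hmem : g * p.out ∈ H := by
        have he : (QuotientGroup.mk g⁻¹ : Equiv.Perm X ⧸ H) = QuotientGroup.mk p.out :=
          (QuotientGroup.out_eq' p).symm
        have := QuotientGroup.eq.mp he
        simpa using this
      have hval : ∀ z, β (p.out⁻¹ z) = f z := by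
        intro z
        have h3 := (H.inv_mem hmem) (g z)
        simp only [mul_inv_rev, Equiv.Perm.mul_apply, Equiv.Perm.inv_def, Equiv.symm_apply_apply] at h3
        rw [hg z] at h3
        exact h3
      refine ⟨⟨p, (hval x).trans hfx, (hval y).trans hfy⟩, ?_⟩
      apply Subtype.ext
      funext z
      exact hval z
  rw [hcount1, hcount2, count_constrained_sub2 a hxy i (by rw [hsum, hX])]

end Stmt14Main
end

section
/- Let a and b be positive integers and suppose there exists an exponent p belonging to both bin(a) ∖ {ord(a)} and bin(b) ∖ {ord(b)}, i.e., a and b have a common 1 in the same position of their binary expansions after (strictly above) their lowest set bits. Then the binomial coefficients C(a+b, a), C(a+b−1, a−1), C(a+b−2, a−1) and C(a+b−2, a−2) are all even. -/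
/-- Decomposition of a positive `n` around its 2-adic valuation. -/
lemma ord_decomp {n : ℕ} (hn : n ≠ 0) :
    n = 2 ^ (padicValNat 2 n + 1) * (n / 2 ^ (padicValNat 2 n + 1))
      + 2 ^ padicValNat 2 n := by
  haveI : Fact (Nat.Prime 2) := ⟨Nat.prime_two⟩
  set v := padicValNat 2 n with hv
  have h1 : 2 ^ v ∣ n := pow_padicValNat_dvd
  have h2 : ¬ 2 ^ (v + 1) ∣ n := pow_succ_padicValNat_not_dvd hn
  have hr : n % 2 ^ (v + 1) = 2 ^ v := by
    have hd : 2 ^ v ∣ n % 2 ^ (v + 1) :=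
      Nat.dvd_mod_iff (pow_dvd_pow 2 (Nat.le_succ v)) |>.mpr h1
    have hlt : n % 2 ^ (v + 1) < 2 ^ (v + 1) := Nat.mod_lt _ (by positivity)
    have hne : n % 2 ^ (v + 1) ≠ 0 := fun h => h2 (Nat.dvd_of_mod_eq_zero h)
    obtain ⟨t, ht⟩ := hd
    have : t < 2 := by
      by_contra h
      push_neg at h
      have : 2 ^ (v + 1) ≤ 2 ^ v * t := by
        calc 2 ^ (v+1) = 2 ^ v * 2 := by ring
        _ ≤ 2 ^ v * t := Nat.mul_le_mul_left _ h
      omega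
    interval_cases t <;> omega
  conv_lhs => rw [← Nat.div_add_mod n (2 ^ (v + 1))]
  rw [hr]

/-- Bit `p > v` of `n - 1` agrees with that of `n`. -/
lemma testBit_pred_high {n p : ℕ} (hn : n ≠ 0) (hp : padicValNat 2 n < p) :
    (n - 1).testBit p = n.testBit p := by
  set v := padicValNat 2 n with hv
  have hd := ord_decomp hn
  rw [← hv] at hd
  have h1 : n - 1 = 2 ^ (v + 1) * (n / 2 ^ (v + 1)) + (2 ^ v - 1) := by
    have : 0 < 2 ^ v := Nat.two_pow_pos _
    omega
  have hb1 : 2 ^ v - 1 < 2 ^ (v + 1) := by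
    have : 0 < 2 ^ v := Nat.two_pow_pos _
    have : 2 ^ v ≤ 2 ^ (v + 1) := pow_le_pow_right₀ (by norm_num) (Nat.le_succ v)
    omega
  have hb2 : 2 ^ v < 2 ^ (v + 1) := Nat.pow_lt_pow_succ (by norm_num)
  rw [h1, Nat.testBit_two_pow_mul_add _ hb1, if_neg (by omega)]
  conv_rhs => rw [hd, Nat.testBit_two_pow_mul_add _ hb2, if_neg (by omega)]

/-- All bits below `v` of `n - 1` are set. -/
lemma testBit_pred_low {n j : ℕ} (hn : n ≠ 0) (hj : j < padicValNat 2 n) :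
    (n - 1).testBit j = true := by
  set v := padicValNat 2 n with hv
  have hd := ord_decomp hn
  rw [← hv] at hd
  have h1 : n - 1 = 2 ^ (v + 1) * (n / 2 ^ (v + 1)) + (2 ^ v - 1) := by
    have : 0 < 2 ^ v := Nat.two_pow_pos _
    omega
  have hb1 : 2 ^ v - 1 < 2 ^ (v + 1) := by
    have : 0 < 2 ^ v := Nat.two_pow_pos _
    have : 2 ^ v ≤ 2 ^ (v + 1) := pow_le_pow_right₀ (by norm_num) (Nat.le_succ v)
    omega
  rw [h1, Nat.testBit_two_pow_mul_add _ hb1, if_pos (by omega),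
    Nat.testBit_two_pow_sub_one]
  simpa using hj

/-- Bit `v` of `n` is set. -/
lemma testBit_ord {n : ℕ} (hn : n ≠ 0) : n.testBit (padicValNat 2 n) = true := by
  set v := padicValNat 2 n with hv
  have hd := ord_decomp hn
  rw [← hv] at hd
  have hb2 : 2 ^ v < 2 ^ (v + 1) := Nat.pow_lt_pow_succ (by norm_num)
  conv_lhs => rw [hd]
  rw [Nat.testBit_two_pow_mul_add _ hb2, if_pos (by omega)]
  exact Nat.testBit_two_pow_self

/-- If bit `p` of `n` is set and `p ≠ v`, then `v < p`. -/
lemma ord_lt_of_testBit {n p : ℕ} (hn : n ≠ 0) (hp : n.testBit p = true)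
    (hne : p ≠ padicValNat 2 n) : padicValNat 2 n < p := by
  set v := padicValNat 2 n with hv
  rcases Nat.lt_or_ge v p with h | h
  · exact h
  exfalso
  have hplt : p < v := lt_of_le_of_ne h hne
  have hd := ord_decomp hn
  rw [← hv] at hd
  have hb2 : 2 ^ v < 2 ^ (v + 1) := Nat.pow_lt_pow_succ (by norm_num)
  rw [hd, Nat.testBit_two_pow_mul_add _ hb2, if_pos (by omega),
    Nat.testBit_two_pow] at hp
  simp at hp
  omega

/-- If `x` and `y` share a set bit, then `C(x+y, x)` is even (Kummer). -/
lemma even_choose_of_shared_bit {x y i : ℕ} (hx : x.testBit i = true)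
    (hy : y.testBit i = true) : Even ((x + y).choose x) := by
  rw [even_iff_two_dvd]
  by_contra hdvd
  have hval : padicValNat 2 ((x + y).choose x) = 0 :=
    padicValNat.eq_zero_of_not_dvd hdvd
  have hxy : (x + y).choose x = (y + x).choose x := by rw [Nat.add_comm]
  have hxpos : 0 < x := Nat.lt_of_lt_of_le (Nat.two_pow_pos i)
    (Nat.ge_two_pow_of_testBit hx)
  have hypos : 0 < y := Nat.lt_of_lt_of_le (Nat.two_pow_pos i)
    (Nat.ge_two_pow_of_testBit hy)
  haveI : Fact (Nat.Prime 2) := ⟨Nat.prime_two⟩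
  have hb : Nat.log 2 (y + x) < Nat.log 2 (y + x) + 1 := Nat.lt_succ_self _
  have hk := padicValNat_choose' (p := 2) (n := y) (k := x)
    (b := Nat.log 2 (y + x) + 1) hb
  rw [hxy, hk] at hval
  have hmem : (i + 1) ∈ (Finset.Ico 1 (Nat.log 2 (y + x) + 1)).filter
      (fun j => 2 ^ j ≤ x % 2 ^ j + y % 2 ^ j) := by
    have hxm : 2 ^ i ≤ x % 2 ^ (i + 1) := by
      apply Nat.ge_two_pow_of_testBit
      simp [Nat.testBit_mod_two_pow, hx]
    have hym : 2 ^ i ≤ y % 2 ^ (i + 1) := by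
      apply Nat.ge_two_pow_of_testBit
      simp [Nat.testBit_mod_two_pow, hy]
    have hle : 2 ^ (i + 1) ≤ y + x := by
      have h1 : 2 ^ i ≤ x := Nat.ge_two_pow_of_testBit hx
      have h2 : 2 ^ i ≤ y := Nat.ge_two_pow_of_testBit hy
      have : (2:ℕ) ^ (i + 1) = 2 ^ i + 2 ^ i := by ring
      omega
    have hlog : i + 1 ≤ Nat.log 2 (y + x) :=
      (Nat.le_log_iff_pow_le (by norm_num) (by omega)).mpr hle
    simp only [Finset.mem_filter, Finset.mem_Ico]
    refine ⟨⟨by omega, by omega⟩, ?_⟩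
    have : (2:ℕ) ^ (i + 1) = 2 ^ i + 2 ^ i := by ring
    omega
  have := Finset.card_pos.mpr ⟨i + 1, hmem⟩
  omega

/-- If `a` and `b` are positive integers having a common `1` in the same
position of their binary expansions strictly above their lowest set bits, i.e. there is
`p ∈ (bin(a) ∖ {ord(a)}) ∩ (bin(b) ∖ {ord(b)})`, then the binomial coefficients
`C(a+b, a)`, `C(a+b-1, a-1)`, `C(a+b-2, a-1)` and `C(a+b-2, a-2)` are all even. -/
theorem stmt17 (a b : ℕ) (ha : 0 < a) (hb : 0 < b)
    (hyp : ∃ p : ℕ, p ∈ binSet a \ {padicValNat 2 a} ∧ p ∈ binSet b \ {padicValNat 2 b}) :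
    Even ((a + b).choose a) ∧ Even ((a + b - 1).choose (a - 1)) ∧
      Even ((a + b - 2).choose (a - 1)) ∧ Even ((a + b - 2).choose (a - 2)) := by
  obtain ⟨p, ⟨hpa, hpa'⟩, hpb, hpb'⟩ := hyp
  simp only [binSet, Set.mem_setOf_eq] at hpa hpb
  simp only [Set.mem_singleton_iff] at hpa' hpb'
  have ha0 : a ≠ 0 := ha.ne'
  have hb0 : b ≠ 0 := hb.ne'
  have hva : padicValNat 2 a < p := ord_lt_of_testBit ha0 hpa hpa'
  have hvb : padicValNat 2 b < p := ord_lt_of_testBit hb0 hpb hpb'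
  -- a and b each have at least two bits, so a ≥ 3, b ≥ 3
  have ha2 : 2 ≤ a := by
    have := Nat.ge_two_pow_of_testBit hpa
    have : 2 ^ 1 ≤ 2 ^ p := pow_le_pow_right₀ (by norm_num) (by omega)
    omega
  have hb2 : 2 ≤ b := by
    have := Nat.ge_two_pow_of_testBit hpb
    have : 2 ^ 1 ≤ 2 ^ p := pow_le_pow_right₀ (by norm_num) (by omega)
    omega
  have hpa1 : (a - 1).testBit p = true := by
    rw [testBit_pred_high ha0 hva]; exact hpa
  have hpb1 : (b - 1).testBit p = true := by
    rw [testBit_pred_high hb0 hvb]; exact hpb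
  refine ⟨even_choose_of_shared_bit hpa hpb, ?_, ?_, ?_⟩
  · have := even_choose_of_shared_bit hpa1 hpb
    have h : a - 1 + b = a + b - 1 := by omega
    rwa [h] at this
  · have := even_choose_of_shared_bit hpa1 hpb1
    have h : a - 1 + (b - 1) = a + b - 2 := by omega
    rwa [h] at this
  · -- need a shared bit of a - 2 and b
    have ha1 : a - 1 ≠ 0 := by omega
    obtain ⟨i, hia, hib⟩ : ∃ i, (a - 2).testBit i = true ∧ b.testBit i = true := by
      rcases eq_or_ne p (padicValNat 2 (a - 1)) with hpe | hpe
      · -- p is the lowest set bit of a - 1; use bit `padicValNat 2 b` instead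
        refine ⟨padicValNat 2 b, ?_, testBit_ord hb0⟩
        have : a - 2 = (a - 1) - 1 := by omega
        rw [this]
        exact testBit_pred_low ha1 (by omega)
      · have hva1 : padicValNat 2 (a - 1) < p := ord_lt_of_testBit ha1 hpa1 hpe
        refine ⟨p, ?_, hpb⟩
        have : a - 2 = (a - 1) - 1 := by omega
        rw [this, testBit_pred_high ha1 hva1]
        exact hpa1
    have := even_choose_of_shared_bit hia hib
    have h : a - 2 + b = a + b - 2 := by omega
    rwa [h] at this
end
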